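/- arXiv:1212.1754 — 7 statements merged into one kernel-verified Lean document; each statement's English description precedes it below -/
import Mathlib

section
/- Let σ be a feasible schedule on m machines whose completion times satisfy C_1(σ) ≤ C_2(σ) ≤ … ≤ C_n(σ). For each machine i and job j let q_{ij} be the total processing time of job j on machine i in σ. Let σ' be the schedule in which each machine i processes, consecutively starting at time 0 and in increasing order of j, one part (j, q_{ij}) for each job j with q_{ij} > 0 (each part preceded by a setup of length s). Then σ' is a feasible schedule and C_j(σ') ≤ C_j(σ) for every j = 1, …, n. -/
open Finset

/-- A feasible schedule on `m` identical machines for `n` jobs with processing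
times `p` and uniform setup time `s`.  A part is a tuple
`(machine, job, q, t)`: a piece of length `q > 0` of the job, started at time
`t ≥ 0` and preceded by a setup of length `s`, occupying the machine during
`[t, t + s + q)`. -/
structure Schedule (m n : ℕ) (p : Fin n → ℝ) (s : ℝ) where
  parts : Finset (Fin m × Fin n × ℝ × ℝ)
  q_pos : ∀ x ∈ parts, 0 < x.2.2.1
  t_nonneg : ∀ x ∈ parts, 0 ≤ x.2.2.2
  sum_q : ∀ j : Fin n,
    ∑ x ∈ parts.filter (fun x => x.2.1 = j), x.2.2.1 = p j
  disj : ∀ x ∈ parts, ∀ y ∈ parts, x ≠ y → x.1 = y.1 →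
    x.2.2.2 + s + x.2.2.1 ≤ y.2.2.2 ∨ y.2.2.2 + s + y.2.2.1 ≤ x.2.2.2

namespace Schedule

variable {m n : ℕ} {p : Fin n → ℝ} {s : ℝ}

/-- The completion time of job `j`: the largest finishing time `t + s + q`
over all parts of job `j` (as a supremum of the finite set of these values). -/
noncomputable def C (σ : Schedule m n p s) (j : Fin n) : ℝ :=
  sSup {r : ℝ | ∃ x ∈ σ.parts, x.2.1 = j ∧ r = x.2.2.2 + s + x.2.2.1}

/-- The total completion time of a schedule. -/
noncomputable def total (σ : Schedule m n p s) : ℝ := ∑ j, σ.C j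

end Schedule

/-- Pairwise disjoint intervals `[t x, t x + ℓ x)` with `ℓ x > 0`, all inside
`[0, T]`, have total length at most `T`. -/
lemma sum_len_le {α : Type*} [DecidableEq α] :
    ∀ (S : Finset α) (T : ℝ) (t ℓ : α → ℝ),
      (∀ x ∈ S, 0 ≤ t x) → (∀ x ∈ S, 0 < ℓ x) → (∀ x ∈ S, t x + ℓ x ≤ T) →
      (∀ x ∈ S, ∀ y ∈ S, x ≠ y → t x + ℓ x ≤ t y ∨ t y + ℓ y ≤ t x) →
      0 ≤ T → ∑ x ∈ S, ℓ x ≤ T := by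
  intro S
  induction S using Finset.strongInduction with
  | _ S ih =>
    intro T t ℓ ht hl hT hd hT0
    rcases S.eq_empty_or_nonempty with rfl | hne
    · simpa
    · obtain ⟨x, hxS, hxmax⟩ := S.exists_max_image t hne
      have hsub : S.erase x ⊂ S := Finset.erase_ssubset hxS
      have hrec : ∑ y ∈ S.erase x, ℓ y ≤ t x := by
        apply ih _ hsub (t x) t ℓ
        · exact fun y hy => ht y (Finset.mem_of_mem_erase hy)
        · exact fun y hy => hl y (Finset.mem_of_mem_erase hy)
        · intro y hy
          have hyS := Finset.mem_of_mem_erase hy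
          have hne' : y ≠ x := Finset.ne_of_mem_erase hy
          rcases hd y hyS x hxS hne' with h | h
          · exact h
          · exfalso
            have h1 := hxmax y hyS
            have h2 := hl x hxS
            linarith
        · intro a ha b hb hab
          exact hd a (Finset.mem_of_mem_erase ha) b (Finset.mem_of_mem_erase hb) hab
        · exact ht x hxS
      have hsum : ∑ y ∈ S, ℓ y = ℓ x + ∑ y ∈ S.erase x, ℓ y :=
        (Finset.add_sum_erase S ℓ hxS).symm
      have hx := hT x hxS
      linarith

/-- Let `σ` be a feasible schedule whose completion times are
nondecreasing in the job index.  Let `q i j` be the total processing time of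
job `j` on machine `i` in `σ`, and let `st i j` be the sum of `s + q i k` over
the jobs `k < j` with `q i k > 0`.  Then the schedule `σ'` in which machine `i`
processes, consecutively from time `0` in increasing job order, one part
`(j, q i j)` for each job `j` with `q i j > 0` (each preceded by a setup `s`)
is feasible, and `C j σ' ≤ C j σ` for every job `j`. -/
theorem stmt0 {m n : ℕ} (hm : 0 < m) {p : Fin n → ℝ} (hp : ∀ j, 0 < p j)
    {s : ℝ} (hs : 0 < s) (σ : Schedule m n p s)
    (hC : Monotone σ.C)
    (q : Fin m → Fin n → ℝ)
    (hq : ∀ i j, q i j =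
      ∑ x ∈ σ.parts.filter (fun x => x.1 = i ∧ x.2.1 = j), x.2.2.1)
    (st : Fin m → Fin n → ℝ)
    (hst : ∀ i j, st i j =
      ∑ k ∈ Finset.univ.filter (fun k : Fin n => k < j ∧ 0 < q i k), (s + q i k)) :
    ∃ σ' : Schedule m n p s,
      σ'.parts =
        (Finset.univ.filter (fun y : Fin m × Fin n => 0 < q y.1 y.2)).image
          (fun y => (y.1, y.2, q y.1 y.2, st y.1 y.2)) ∧
      ∀ j, σ'.C j ≤ σ.C j := by
  classical
  -- basic facts about q
  have hq0 : ∀ i j, 0 ≤ q i j := by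
    intro i j
    rw [hq]
    exact Finset.sum_nonneg fun x hx =>
      le_of_lt (σ.q_pos x (Finset.mem_filter.mp hx).1)
  have hsumq : ∀ j, ∑ i, q i j = p j := by
    intro j
    calc ∑ i, q i j
        = ∑ i, ∑ x ∈ (σ.parts.filter (fun x => x.2.1 = j)).filter
            (fun x => x.1 = i), x.2.2.1 := by
          refine Finset.sum_congr rfl fun i _ => ?_
          rw [hq, Finset.filter_filter]
          apply Finset.sum_congr _ (fun _ _ => rfl)
          apply Finset.filter_congr
          intro x _
          simp [and_comm]
      _ = p j := by
          rw [Finset.sum_fiberwise, σ.sum_q]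
  have hst0 : ∀ i j, 0 ≤ st i j := by
    intro i j
    rw [hst]
    refine Finset.sum_nonneg fun k hk => ?_
    have := (Finset.mem_filter.mp hk).2.2
    linarith
  -- injectivity of the part-building map
  have hinj : Function.Injective
      (fun y : Fin m × Fin n => ((y.1, y.2, q y.1 y.2, st y.1 y.2) : Fin m × Fin n × ℝ × ℝ)) := by
    intro a b h
    obtain ⟨ia, ja⟩ := a
    obtain ⟨ib, jb⟩ := b
    simp only [Prod.mk.injEq] at h
    simp only [Prod.mk.injEq]
    exact ⟨h.1, h.2.1⟩
  -- ordering of start times on a machine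
  have hord : ∀ (i : Fin m) (j k : Fin n), j < k → 0 < q i j →
      st i j + s + q i j ≤ st i k := by
    intro i j k hjk hqj
    rw [hst, hst]
    have hjnot : j ∉ Finset.univ.filter (fun l : Fin n => l < j ∧ 0 < q i l) := by
      simp
    have hsub : insert j (Finset.univ.filter (fun l : Fin n => l < j ∧ 0 < q i l)) ⊆
        Finset.univ.filter (fun l : Fin n => l < k ∧ 0 < q i l) := by
      intro l hl
      rcases Finset.mem_insert.mp hl with rfl | hl
      · exact Finset.mem_filter.mpr ⟨Finset.mem_univ _, hjk, hqj⟩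
      · have h := (Finset.mem_filter.mp hl).2
        exact Finset.mem_filter.mpr ⟨Finset.mem_univ _, h.1.trans hjk, h.2⟩
    have h1 : ∑ l ∈ insert j (Finset.univ.filter (fun l : Fin n => l < j ∧ 0 < q i l)),
        (s + q i l) ≤ ∑ l ∈ Finset.univ.filter (fun l : Fin n => l < k ∧ 0 < q i l),
        (s + q i l) := by
      refine Finset.sum_le_sum_of_subset_of_nonneg hsub fun l hl _ => ?_
      have := (Finset.mem_filter.mp hl).2.2
      linarith
    rw [Finset.sum_insert hjnot] at h1
    linarith
  -- the set of parts of the new schedule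
  set f : Fin m × Fin n → Fin m × Fin n × ℝ × ℝ :=
    fun y => (y.1, y.2, q y.1 y.2, st y.1 y.2) with hf
  set P : Finset (Fin m × Fin n × ℝ × ℝ) :=
    (Finset.univ.filter (fun y : Fin m × Fin n => 0 < q y.1 y.2)).image f with hP
  -- facts about σ's completion times
  have Cset : ∀ (τ : Schedule m n p s) (j : Fin n),
      {r : ℝ | ∃ x ∈ τ.parts, x.2.1 = j ∧ r = x.2.2.2 + s + x.2.2.1} =
      ↑((τ.parts.filter (fun x => x.2.1 = j)).image
          (fun x => x.2.2.2 + s + x.2.2.1)) := by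
    intro τ j
    ext r
    simp only [Set.mem_setOf_eq, Finset.coe_image, Set.mem_image, Finset.mem_coe,
      Finset.mem_filter]
    constructor
    · rintro ⟨x, hx, hxj, rfl⟩
      exact ⟨x, ⟨hx, hxj⟩, rfl⟩
    · rintro ⟨x, ⟨hx, hxj⟩, rfl⟩
      exact ⟨x, hx, hxj, rfl⟩
  have hbdd : ∀ (τ : Schedule m n p s) (j : Fin n),
      BddAbove {r : ℝ | ∃ x ∈ τ.parts, x.2.1 = j ∧ r = x.2.2.2 + s + x.2.2.1} := by
    intro τ j
    rw [Cset]
    exact Finset.bddAbove _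
  have le_C : ∀ (τ : Schedule m n p s), ∀ x ∈ τ.parts,
      x.2.2.2 + s + x.2.2.1 ≤ τ.C x.2.1 := by
    intro τ x hx
    exact le_csSup (hbdd τ x.2.1) ⟨x, hx, rfl, rfl⟩
  have hC0 : ∀ j, 0 ≤ σ.C j := by
    intro j
    have hne : (σ.parts.filter (fun x => x.2.1 = j)).Nonempty := by
      by_contra h
      rw [Finset.not_nonempty_iff_eq_empty] at h
      have h2 := σ.sum_q j
      rw [h] at h2
      simp at h2
      linarith [hp j]
    obtain ⟨x, hx⟩ := hne
    have hx' := Finset.mem_filter.mp hx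
    have h1 := le_C σ x hx'.1
    rw [hx'.2] at h1
    have h2 := σ.t_nonneg x hx'.1
    have h3 := σ.q_pos x hx'.1
    linarith
  -- the key estimate
  have main : ∀ i j, 0 < q i j → st i j + s + q i j ≤ σ.C j := by
    intro i j hqij
    set S := σ.parts.filter (fun x => x.1 = i ∧ x.2.1 ≤ j) with hS
    have hmemS : ∀ x ∈ S, x ∈ σ.parts := fun x hx => (Finset.mem_filter.mp hx).1
    have hsumS : ∑ x ∈ S, (s + x.2.2.1) ≤ σ.C j := by
      apply sum_len_le S (σ.C j) (fun x => x.2.2.2) (fun x => s + x.2.2.1)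
      · exact fun x hx => σ.t_nonneg x (hmemS x hx)
      · intro x hx
        have := σ.q_pos x (hmemS x hx)
        linarith
      · intro x hx
        have h1 := le_C σ x (hmemS x hx)
        have h2 : σ.C x.2.1 ≤ σ.C j := hC (Finset.mem_filter.mp hx).2.2
        linarith
      · intro x hx y hy hxy
        have hmach : x.1 = y.1 := by
          rw [(Finset.mem_filter.mp hx).2.1, (Finset.mem_filter.mp hy).2.1]
        rcases σ.disj x (hmemS x hx) y (hmemS y hy) hxy hmach with h | h
        · left; linarith
        · right; linarith
      · exact hC0 j
    have fib := Finset.sum_fiberwise S (fun x => x.2.1) (fun x => s + x.2.2.1)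
    set K := Finset.univ.filter (fun k : Fin n => k ≤ j ∧ 0 < q i k) with hK
    have hKins : K = insert j (Finset.univ.filter (fun k : Fin n => k < j ∧ 0 < q i k)) := by
      ext k
      simp only [hK, Finset.mem_insert, Finset.mem_filter, Finset.mem_univ, true_and]
      constructor
      · rintro ⟨hkj, hqk⟩
        rcases lt_or_eq_of_le hkj with h | h
        · exact Or.inr ⟨h, hqk⟩
        · exact Or.inl h
      · rintro (rfl | ⟨h1, h2⟩)
        · exact ⟨le_refl _, hqij⟩
        · exact ⟨le_of_lt h1, h2⟩
    have hstK : st i j + s + q i j = ∑ k ∈ K, (s + q i k) := by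
      rw [hKins, Finset.sum_insert (by simp), hst]
      ring
    have hfiber_eq : ∀ k ∈ K, S.filter (fun x => x.2.1 = k) =
        σ.parts.filter (fun x => x.1 = i ∧ x.2.1 = k) := by
      intro k hk
      have hkj : k ≤ j := (Finset.mem_filter.mp hk).2.1
      rw [hS, Finset.filter_filter]
      apply Finset.filter_congr
      intro x _
      constructor
      · rintro ⟨⟨h1, _⟩, h3⟩
        exact ⟨h1, h3⟩
      · rintro ⟨h1, h3⟩
        exact ⟨⟨h1, h3 ▸ hkj⟩, h3⟩
    have hterm : ∀ k ∈ K, s + q i k ≤ ∑ x ∈ S.filter (fun x => x.2.1 = k), (s + x.2.2.1) := by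
      intro k hk
      rw [hfiber_eq k hk]
      have hqk : 0 < q i k := (Finset.mem_filter.mp hk).2.2
      set F := σ.parts.filter (fun x => x.1 = i ∧ x.2.1 = k) with hF
      have hFq : ∑ x ∈ F, x.2.2.1 = q i k := (hq i k).symm
      have hFne : F.Nonempty := by
        by_contra h
        rw [Finset.not_nonempty_iff_eq_empty] at h
        rw [h] at hFq
        simp at hFq
        linarith
      have hcard : 1 ≤ F.card := Finset.card_pos.mpr hFne
      rw [Finset.sum_add_distrib, Finset.sum_const, nsmul_eq_mul, hFq]
      have hc : (1 : ℝ) ≤ F.card := by exact_mod_cast hcard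
      nlinarith
    have hnonneg : ∀ k ∈ (Finset.univ : Finset (Fin n)),
        0 ≤ ∑ x ∈ S.filter (fun x => x.2.1 = k), (s + x.2.2.1) := by
      intro k _
      refine Finset.sum_nonneg fun x hx => ?_
      have := σ.q_pos x (hmemS x (Finset.mem_filter.mp hx).1)
      linarith
    calc st i j + s + q i j = ∑ k ∈ K, (s + q i k) := hstK
      _ ≤ ∑ k ∈ K, ∑ x ∈ S.filter (fun x => x.2.1 = k), (s + x.2.2.1) :=
          Finset.sum_le_sum hterm
      _ ≤ ∑ k, ∑ x ∈ S.filter (fun x => x.2.1 = k), (s + x.2.2.1) :=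
          Finset.sum_le_sum_of_subset_of_nonneg (Finset.subset_univ K)
            (fun k hk _ => hnonneg k hk)
      _ = ∑ x ∈ S, (s + x.2.2.1) := fib
      _ ≤ σ.C j := hsumS
  -- build the new schedule
  refine ⟨⟨P, ?_, ?_, ?_, ?_⟩, rfl, ?_⟩
  · -- q_pos
    intro x hx
    obtain ⟨y, hy, rfl⟩ := Finset.mem_image.mp hx
    exact (Finset.mem_filter.mp hy).2
  · -- t_nonneg
    intro x hx
    obtain ⟨y, hy, rfl⟩ := Finset.mem_image.mp hx
    exact hst0 y.1 y.2
  · -- sum_q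
    intro j
    rw [hP]
    rw [Finset.sum_filter, Finset.sum_image (fun a _ b _ h => hinj h), Finset.sum_filter]
    rw [Fintype.sum_prod_type]
    have hinner : ∀ i : Fin m,
        (∑ k : Fin n, if 0 < q i k then if (f (i, k)).2.1 = j then (f (i, k)).2.2.1 else 0 else 0)
        = q i j := by
      intro i
      have hrw : ∀ k : Fin n,
          (if 0 < q i k then if (f (i, k)).2.1 = j then (f (i, k)).2.2.1 else 0 else 0)
          = (if k = j then (if 0 < q i k then q i k else 0) else 0) := by
        intro k
        by_cases h1 : 0 < q i k <;> by_cases h2 : k = j <;> simp [hf, h1, h2]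
      rw [Finset.sum_congr rfl (fun k _ => hrw k), Finset.sum_ite_eq' Finset.univ j
        (fun k => if 0 < q i k then q i k else 0)]
      simp only [Finset.mem_univ, if_true]
      by_cases h : 0 < q i j
      · simp [h]
      · simp only [h, if_false]
        have := hq0 i j
        linarith [le_antisymm (not_lt.mp h) this]
    calc (∑ i : Fin m, ∑ k : Fin n,
          if 0 < q (i, k).1 (i, k).2 then
            if (f (i, k)).2.1 = j then (f (i, k)).2.2.1 else 0 else 0)
        = ∑ i : Fin m, q i j := Finset.sum_congr rfl (fun i _ => hinner i)
      _ = p j := hsumq j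
  · -- disj
    intro x hx y hy hxy hmach
    obtain ⟨a, ha, rfl⟩ := Finset.mem_image.mp hx
    obtain ⟨b, hb, rfl⟩ := Finset.mem_image.mp hy
    obtain ⟨i, ja⟩ := a
    obtain ⟨i', jb⟩ := b
    have hqa : 0 < q i ja := (Finset.mem_filter.mp ha).2
    have hqb : 0 < q i' jb := (Finset.mem_filter.mp hb).2
    have h1 : i = i' := hmach
    subst h1
    have h2 : ja ≠ jb := by
      intro h
      exact hxy (by rw [h])
    rcases lt_or_gt_of_ne h2 with h | h
    · left
      show st i ja + s + q i ja ≤ st i jb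
      exact hord i ja jb h hqa
    · right
      show st i jb + s + q i jb ≤ st i ja
      exact hord i jb ja h hqb
  · -- completion time bound
    intro j
    show sSup {r : ℝ | ∃ x ∈ P, x.2.1 = j ∧ r = x.2.2.2 + s + x.2.2.1} ≤ σ.C j
    apply Real.sSup_le _ (hC0 j)
    intro r hr
    obtain ⟨x, hx, hxj, rfl⟩ := hr
    obtain ⟨y, hy, rfl⟩ := Finset.mem_image.mp hx
    have hqy : 0 < q y.1 y.2 := (Finset.mem_filter.mp hy).2
    have hj : y.2 = j := hxj
    subst hj
    exact main y.1 y.2 hqy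
end

section
/- Let m = 2 and let σ be an optimal schedule having the SPT property. Let j < k be 2-jobs of σ such that every job l with j < l < k is a 1-job. If there exists at least one job l with j < l < k, then each of the two machines processes at least one job with index strictly between j and k. Moreover, if j is the 2-job of largest index and there exists a job with index larger than j, then each of the two machines processes at least one job with index larger than j. -/
open Finset

namespace Schedule

variable {n : ℕ} {p : Fin n → ℝ} {s : ℝ}

/-- A job is a 1-job if all its parts are on a single machine. -/
def OneJob (σ : Schedule 2 n p s) (j : Fin n) : Prop :=
  ∃ i : Fin 2, ∀ x ∈ σ.parts, x.2.1 = j → x.1 = i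

/-- A job is a 2-job if it has parts on both machines. -/
def TwoJob (σ : Schedule 2 n p s) (j : Fin n) : Prop :=
  ∀ i : Fin 2, ∃ x ∈ σ.parts, x.2.1 = j ∧ x.1 = i

end Schedule

/-- A schedule has the SPT property if each machine has at most one part per
job and on each machine the parts occur in increasing order of job index. -/
def Schedule.SPTProperty {m n : ℕ} {p : Fin n → ℝ} {s : ℝ}
    (σ : Schedule m n p s) : Prop :=
  (∀ x ∈ σ.parts, ∀ y ∈ σ.parts, x.1 = y.1 → x.2.1 = y.2.1 → x = y) ∧
  (∀ x ∈ σ.parts, ∀ y ∈ σ.parts, x.1 = y.1 → x.2.2.2 < y.2.2.2 →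
    x.2.1 < y.2.1)

set_option maxHeartbeats 1600000

namespace StmtAux


variable {n : ℕ} {p : Fin n → ℝ} {s : ℝ}

lemma parts_nonempty (σ : Schedule 2 n p s) (hp : ∀ j, 0 < p j) (j : Fin n) :
    (σ.parts.filter (fun x => x.2.1 = j)).Nonempty := by
  rcases (σ.parts.filter (fun x => x.2.1 = j)).eq_empty_or_nonempty with h | h
  · exfalso
    have hq := σ.sum_q j
    rw [h, Finset.sum_empty] at hq
    exact (hp j).ne' hq.symm
  · exact h

lemma exists_part (σ : Schedule 2 n p s) (hp : ∀ j, 0 < p j) (j : Fin n) :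
    ∃ x ∈ σ.parts, x.2.1 = j := by
  obtain ⟨x, hx⟩ := parts_nonempty σ hp j
  exact ⟨x, (Finset.mem_filter.1 hx).1, (Finset.mem_filter.1 hx).2⟩

lemma C_set (σ : Schedule 2 n p s) (j : Fin n) :
    {r : ℝ | ∃ x ∈ σ.parts, x.2.1 = j ∧ r = x.2.2.2 + s + x.2.2.1}
      = (fun x : Fin 2 × Fin n × ℝ × ℝ => x.2.2.2 + s + x.2.2.1) ''
          {x | x ∈ σ.parts ∧ x.2.1 = j} := by
  ext r
  constructor
  · rintro ⟨x, hx, hj, rfl⟩; exact ⟨x, ⟨hx, hj⟩, rfl⟩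
  · rintro ⟨x, ⟨hx, hj⟩, rfl⟩; exact ⟨x, hx, hj, rfl⟩

lemma C_bddAbove (σ : Schedule 2 n p s) (j : Fin n) :
    BddAbove {r : ℝ | ∃ x ∈ σ.parts, x.2.1 = j ∧ r = x.2.2.2 + s + x.2.2.1} := by
  rw [C_set]
  exact Set.Finite.bddAbove (Set.Finite.image _
    (σ.parts.finite_toSet.subset (fun x hx => hx.1)))

lemma le_C (σ : Schedule 2 n p s) {j : Fin n} {x : Fin 2 × Fin n × ℝ × ℝ}
    (hx : x ∈ σ.parts) (hj : x.2.1 = j) :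
    x.2.2.2 + s + x.2.2.1 ≤ σ.C j :=
  le_csSup (C_bddAbove σ j) ⟨x, hx, hj, rfl⟩

lemma C_le (σ : Schedule 2 n p s) (hp : ∀ j, 0 < p j) (j : Fin n) {r : ℝ}
    (h : ∀ x ∈ σ.parts, x.2.1 = j → x.2.2.2 + s + x.2.2.1 ≤ r) :
    σ.C j ≤ r := by
  apply csSup_le
  · obtain ⟨x, hx, hj⟩ := exists_part σ hp j
    exact ⟨_, x, hx, hj, rfl⟩
  · rintro b ⟨x, hx, hj, rfl⟩
    exact h x hx hj

lemma ordered (σ : Schedule 2 n p s) (hs : 0 < s) (hSPT : σ.SPTProperty)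
    {x y : Fin 2 × Fin n × ℝ × ℝ} (hx : x ∈ σ.parts) (hy : y ∈ σ.parts)
    (hm : x.1 = y.1) (hj : x.2.1 < y.2.1) :
    x.2.2.2 + s + x.2.2.1 ≤ y.2.2.2 := by
  have hne : x ≠ y := by rintro rfl; exact lt_irrefl _ hj
  rcases σ.disj x hx y hy hne hm with h | h
  · exact h
  · exfalso
    have hqy := σ.q_pos y hy
    have h1 : y.2.2.2 < x.2.2.2 := by linarith
    exact absurd (hSPT.2 y hy x hx hm.symm h1) (lt_asymm hj)

lemma fin2_cases (i m : Fin 2) : m = i ∨ m = (if i = 0 then 1 else 0) := by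
  fin_cases i <;> fin_cases m <;> simp

lemma fin2_ne (i : Fin 2) : (if i = 0 then (1 : Fin 2) else 0) ≠ i := by
  fin_cases i <;> simp

/-- The workhorse: if we can replace all parts of the jobs in `J` by new parts
`N` (feasibly), with per-job completion bounds summing strictly below the old
sum of completion times, then `σ` was not optimal. -/
lemma no_improve (σ : Schedule 2 n p s) (hp : ∀ j, 0 < p j)
    (hopt : ∀ σ' : Schedule 2 n p s, σ.total ≤ σ'.total)
    (J : Finset (Fin n)) (N : Finset (Fin 2 × Fin n × ℝ × ℝ)) (bnd : Fin n → ℝ)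
    (hq : ∀ x ∈ N, 0 < x.2.2.1)
    (ht : ∀ x ∈ N, 0 ≤ x.2.2.2)
    (hjob : ∀ x ∈ N, x.2.1 ∈ J)
    (hsum : ∀ jb ∈ J, ∑ x ∈ N.filter (fun x => x.2.1 = jb), x.2.2.1 = p jb)
    (hNN : ∀ x ∈ N, ∀ y ∈ N, x ≠ y → x.1 = y.1 →
      x.2.2.2 + s + x.2.2.1 ≤ y.2.2.2 ∨ y.2.2.2 + s + y.2.2.1 ≤ x.2.2.2)
    (hNO : ∀ x ∈ N, ∀ y ∈ σ.parts, y.2.1 ∉ J → x.1 = y.1 →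
      x.2.2.2 + s + x.2.2.1 ≤ y.2.2.2 ∨ y.2.2.2 + s + y.2.2.1 ≤ x.2.2.2)
    (hbd : ∀ x ∈ N, x.2.2.2 + s + x.2.2.1 ≤ bnd x.2.1)
    (hlt : ∑ jb ∈ J, bnd jb < ∑ jb ∈ J, σ.C jb) : False := by
  classical
  set keep := σ.parts.filter (fun x => x.2.1 ∉ J) with hkeep
  have hkeepsub : keep ⊆ σ.parts := Finset.filter_subset _ _
  have hmemkeep : ∀ x, x ∈ keep ↔ x ∈ σ.parts ∧ x.2.1 ∉ J := by
    intro x; simp [hkeep]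
  have hdisjKN : Disjoint keep N := by
    rw [Finset.disjoint_left]
    intro x hx hxN
    exact ((hmemkeep x).1 hx).2 (hjob x hxN)
  set P' := keep ∪ N with hP'
  have hmemP' : ∀ x, x ∈ P' ↔ (x ∈ σ.parts ∧ x.2.1 ∉ J) ∨ x ∈ N := by
    intro x; simp [hP', Finset.mem_union, hmemkeep]
  have hq' : ∀ x ∈ P', 0 < x.2.2.1 := by
    intro x hx
    rcases (hmemP' x).1 hx with ⟨hx1, _⟩ | hx1
    · exact σ.q_pos x hx1
    · exact hq x hx1
  have ht' : ∀ x ∈ P', 0 ≤ x.2.2.2 := by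
    intro x hx
    rcases (hmemP' x).1 hx with ⟨hx1, _⟩ | hx1
    · exact σ.t_nonneg x hx1
    · exact ht x hx1
  have hsum' : ∀ jb : Fin n,
      ∑ x ∈ P'.filter (fun x => x.2.1 = jb), x.2.2.1 = p jb := by
    intro jb
    have hsplit : P'.filter (fun x => x.2.1 = jb)
        = keep.filter (fun x => x.2.1 = jb) ∪ N.filter (fun x => x.2.1 = jb) := by
      rw [hP', Finset.filter_union]
    rw [hsplit, Finset.sum_union (Finset.disjoint_filter_filter hdisjKN)]
    by_cases hjJ : jb ∈ J
    · have h1 : keep.filter (fun x => x.2.1 = jb) = ∅ := by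
        apply Finset.filter_eq_empty_iff.2
        intro x hx hxj
        exact ((hmemkeep x).1 hx).2 (hxj ▸ hjJ)
      rw [h1, Finset.sum_empty, zero_add, hsum jb hjJ]
    · have h2 : N.filter (fun x => x.2.1 = jb) = ∅ := by
        apply Finset.filter_eq_empty_iff.2
        intro x hx hxj
        exact hjJ (hxj ▸ hjob x hx)
      have h1 : keep.filter (fun x => x.2.1 = jb) = σ.parts.filter (fun x => x.2.1 = jb) := by
        ext x
        simp only [Finset.mem_filter, hmemkeep]
        constructor
        · rintro ⟨⟨h1, _⟩, h3⟩; exact ⟨h1, h3⟩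
        · rintro ⟨h1, h3⟩; exact ⟨⟨h1, fun hc => hjJ (h3 ▸ hc)⟩, h3⟩
      rw [h1, h2, Finset.sum_empty, add_zero, σ.sum_q jb]
  have hdisj' : ∀ x ∈ P', ∀ y ∈ P', x ≠ y → x.1 = y.1 →
      x.2.2.2 + s + x.2.2.1 ≤ y.2.2.2 ∨ y.2.2.2 + s + y.2.2.1 ≤ x.2.2.2 := by
    intro x hx y hy hne hm
    rcases (hmemP' x).1 hx with ⟨hx1, hx2⟩ | hx1 <;>
      rcases (hmemP' y).1 hy with ⟨hy1, hy2⟩ | hy1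
    · exact σ.disj x hx1 y hy1 hne hm
    · rcases hNO y hy1 x hx1 hx2 hm.symm with h | h
      · right; exact h
      · left; exact h
    · exact hNO x hx1 y hy1 hy2 hm
    · exact hNN x hx1 y hy1 hne hm
  set σ' : Schedule 2 n p s := ⟨P', hq', ht', hsum', hdisj'⟩ with hσ'
  -- untouched jobs have equal completion time
  have hCeq : ∀ jb : Fin n, jb ∉ J → σ'.C jb = σ.C jb := by
    intro jb hjb
    unfold Schedule.C
    congr 1
    ext r
    constructor
    · rintro ⟨x, hx, hj, rfl⟩
      rcases (hmemP' x).1 hx with ⟨hx1, _⟩ | hx1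
      · exact ⟨x, hx1, hj, rfl⟩
      · exact absurd (hj ▸ hjob x hx1) hjb
    · rintro ⟨x, hx, hj, rfl⟩
      refine ⟨x, (hmemP' x).2 (Or.inl ⟨hx, fun hc => hjb (hj ▸ hc)⟩), hj, rfl⟩
  have hCbnd : ∀ jb ∈ J, σ'.C jb ≤ bnd jb := by
    intro jb hjb
    apply C_le σ' hp jb
    intro x hx hxj
    rcases (hmemP' x).1 hx with ⟨_, hx2⟩ | hx1
    · exact absurd (hxj ▸ hjb) hx2
    · exact hxj ▸ hbd x hx1
  have htot : σ'.total < σ.total := by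
    unfold Schedule.total
    have hsub : J ⊆ (Finset.univ : Finset (Fin n)) := Finset.subset_univ J
    rw [← Finset.sum_sdiff hsub, ← Finset.sum_sdiff (f := fun j => σ.C j) hsub]
    have h1 : ∑ jb ∈ Finset.univ \ J, σ'.C jb = ∑ jb ∈ Finset.univ \ J, σ.C jb := by
      apply Finset.sum_congr rfl
      intro jb hjb
      exact hCeq jb (Finset.mem_sdiff.1 hjb).2
    have h2 : ∑ jb ∈ J, σ'.C jb ≤ ∑ jb ∈ J, bnd jb := Finset.sum_le_sum hCbnd
    linarith
  exact absurd (hopt σ') (not_le.2 htot)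

lemma part2 (hp : ∀ j, 0 < p j) (hs : 0 < s) (σ : Schedule 2 n p s)
    (hopt : ∀ σ' : Schedule 2 n p s, σ.total ≤ σ'.total) (hSPT : σ.SPTProperty)
    (j : Fin n) (h2j : σ.TwoJob j) (hmax : ∀ l, σ.TwoJob l → l ≤ j)
    (hex : ∃ l, j < l) :
    ∀ i : Fin 2, ∃ x ∈ σ.parts, x.1 = i ∧ j < x.2.1 := by
  classical
  by_contra hcon
  push_neg at hcon
  obtain ⟨i, hi⟩ := hcon
  set i' : Fin 2 := if i = 0 then 1 else 0 with hi'def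
  have hii' : i' ≠ i := fin2_ne i
  have hmach : ∀ m : Fin 2, m = i ∨ m = i' := fun m => fin2_cases i m
  obtain ⟨x1, hx1, hx1j, hx1m⟩ := h2j i
  obtain ⟨x2, hx2, hx2j, hx2m⟩ := h2j i'
  have hx12 : x1 ≠ x2 := by
    intro h
    exact hii' (by rw [← hx2m, ← h, hx1m])
  have hfilterj : σ.parts.filter (fun x => x.2.1 = j) = {x1, x2} := by
    ext y
    simp only [Finset.mem_filter, Finset.mem_insert, Finset.mem_singleton]
    constructor
    · rintro ⟨hy, hyj⟩
      rcases hmach y.1 with hm | hm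
      · left; exact hSPT.1 y hy x1 hx1 (hm.trans hx1m.symm) (hyj.trans hx1j.symm)
      · right; exact hSPT.1 y hy x2 hx2 (hm.trans hx2m.symm) (hyj.trans hx2j.symm)
    · rintro (rfl | rfl)
      · exact ⟨hx1, hx1j⟩
      · exact ⟨hx2, hx2j⟩
  have hpj : p j = x1.2.2.1 + x2.2.2.1 := by
    have h := σ.sum_q j
    rw [hfilterj, Finset.sum_pair hx12] at h
    exact h.symm
  -- a part of some job > j, with minimal start time, on machine i'
  obtain ⟨l1, hl1⟩ := hex
  obtain ⟨z, hz, hzj⟩ := exists_part σ hp l1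
  have hzm : z.1 = i' := by
    rcases hmach z.1 with hm | hm
    · exact absurd (hi z hz hm) (not_le.2 (hzj ▸ hl1))
    · exact hm
  set P := σ.parts.filter (fun y => y.1 = i' ∧ j < y.2.1) with hP
  have hPne : P.Nonempty := ⟨z, Finset.mem_filter.2 ⟨hz, hzm, hzj ▸ hl1⟩⟩
  obtain ⟨y0, hy0P, hy0min⟩ := P.exists_min_image (fun y => y.2.2.2) hPne
  have hy0 : y0 ∈ σ.parts := (Finset.mem_filter.1 hy0P).1
  have hy0m : y0.1 = i' := ((Finset.mem_filter.1 hy0P).2).1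
  have hjy0 : j < y0.2.1 := ((Finset.mem_filter.1 hy0P).2).2
  have hfl0 : σ.parts.filter (fun x => x.2.1 = y0.2.1) = {y0} := by
    ext w
    simp only [Finset.mem_filter, Finset.mem_singleton]
    constructor
    · rintro ⟨hw, hwj⟩
      have hwm : w.1 = i' := by
        rcases hmach w.1 with hm | hm
        · exact absurd (hi w hw hm) (not_le.2 (hwj ▸ hjy0))
        · exact hm
      exact hSPT.1 w hw y0 hy0 (hwm.trans hy0m.symm) hwj
    · rintro rfl
      exact ⟨hy0, rfl⟩
  have hql0 : y0.2.2.1 = p y0.2.1 := by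
    have h := σ.sum_q y0.2.1
    rw [hfl0, Finset.sum_singleton] at h
    exact h
  have hjl0 : j ≠ y0.2.1 := ne_of_lt hjy0
  -- B ≥ f'
  have hBf : x2.2.2.2 + s + x2.2.2.1 ≤ y0.2.2.2 :=
    ordered σ hs hSPT hx2 hy0 (hx2m.trans hy0m.symm) (hx2j ▸ hjy0)
  -- the improving move
  set Xj : Fin 2 × Fin n × ℝ × ℝ := (i, j, p j, x1.2.2.2) with hXj
  set Xl : Fin 2 × Fin n × ℝ × ℝ := (i', y0.2.1, p y0.2.1, x2.2.2.2) with hXl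
  have hXjXl : Xj ≠ Xl := by
    intro h
    exact hii' (congrArg Prod.fst h).symm
  set J : Finset (Fin n) := {j, y0.2.1} with hJ
  set N : Finset (Fin 2 × Fin n × ℝ × ℝ) := {Xj, Xl} with hN
  have hmemN : ∀ x, x ∈ N ↔ x = Xj ∨ x = Xl := by
    intro x; simp [hN]
  have hq1 := σ.q_pos x1 hx1
  have hq2 := σ.q_pos x2 hx2
  have ht1 := σ.t_nonneg x1 hx1
  have ht2 := σ.t_nonneg x2 hx2
  apply no_improve σ hp hopt J N
    (fun jb => if jb = j then x1.2.2.2 + s + p j else x2.2.2.2 + s + p y0.2.1)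
  · intro x hx
    rcases (hmemN x).1 hx with rfl | rfl
    · exact hp j
    · exact hp y0.2.1
  · intro x hx
    rcases (hmemN x).1 hx with rfl | rfl
    · exact ht1
    · exact ht2
  · intro x hx
    rcases (hmemN x).1 hx with rfl | rfl
    · simp [hJ, hXj]
    · simp [hJ, hXl]
  · intro jb hjb
    simp only [hJ, Finset.mem_insert, Finset.mem_singleton] at hjb
    rcases hjb with rfl | rfl
    · have hfil : N.filter (fun x => x.2.1 = jb) = {Xj} := by
        ext x
        simp only [Finset.mem_filter, hmemN, Finset.mem_singleton]
        constructor
        · rintro ⟨rfl | rfl, hj2⟩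
          · rfl
          · exact absurd hj2.symm hjl0
        · rintro rfl
          exact ⟨Or.inl rfl, rfl⟩
      rw [hfil, Finset.sum_singleton]
    · have hfil : N.filter (fun x => x.2.1 = y0.2.1) = {Xl} := by
        ext x
        simp only [Finset.mem_filter, hmemN, Finset.mem_singleton]
        constructor
        · rintro ⟨rfl | rfl, hj2⟩
          · exact absurd hj2 hjl0
          · rfl
        · rintro rfl
          exact ⟨Or.inr rfl, rfl⟩
      rw [hfil, Finset.sum_singleton]
  · intro x hx y hy hne hm
    exfalso
    rcases (hmemN x).1 hx with rfl | rfl <;> rcases (hmemN y).1 hy with rfl | rfl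
    · exact hne rfl
    · exact hii' hm.symm
    · exact hii' hm
    · exact hne rfl
  · -- hNO
    intro x hx y hy hyJ hm
    have hyj : y.2.1 ≠ j := fun h => hyJ (by simp [hJ, h])
    have hyl0 : y.2.1 ≠ y0.2.1 := fun h => hyJ (by simp [hJ, h])
    rcases (hmemN x).1 hx with rfl | rfl
    · -- Xj on machine i : all old kept parts on i end before t1
      have hym : y.1 = i := hm.symm
      have hyltj : y.2.1 < j := lt_of_le_of_ne (hi y hy hym) hyj
      right
      show y.2.2.2 + s + y.2.2.1 ≤ x1.2.2.2
      exact ordered σ hs hSPT hy hx1 (hym.trans hx1m.symm)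
        (by rw [hx1j]; exact hyltj)
    · -- Xl on machine i'
      have hym : y.1 = i' := hm.symm
      rcases lt_trichotomy y.2.1 j with hlt | heq | hgt
      · right
        show y.2.2.2 + s + y.2.2.1 ≤ x2.2.2.2
        exact ordered σ hs hSPT hy hx2 (hym.trans hx2m.symm)
          (by rw [hx2j]; exact hlt)
      · exact absurd heq hyj
      · -- y ∈ P, y ≠ y0, so it starts after y0 finishes
        have hyP : y ∈ P := Finset.mem_filter.2 ⟨hy, hym, hgt⟩
        have hyy0 : y ≠ y0 := fun h => hyl0 (by rw [h])
        have hge : y0.2.2.2 ≤ y.2.2.2 := hy0min y hyP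
        left
        show x2.2.2.2 + s + p y0.2.1 ≤ y.2.2.2
        rcases σ.disj y0 hy0 y hy (Ne.symm hyy0) (hy0m.trans hym.symm) with h | h
        · calc x2.2.2.2 + s + p y0.2.1 ≤ y0.2.2.2 + s + y0.2.2.1 := by
                rw [hql0]; linarith
            _ ≤ y.2.2.2 := h
        · exfalso
          have hqy := σ.q_pos y hy
          linarith
  · -- hbd
    intro x hx
    rcases (hmemN x).1 hx with rfl | rfl
    · simp [hXj]
    · simp [hXl, Ne.symm hjl0]
  · -- hlt
    rw [hJ, Finset.sum_pair hjl0, Finset.sum_pair hjl0,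
      if_pos rfl, if_neg (Ne.symm hjl0)]
    have hCj : x1.2.2.2 + s + x1.2.2.1 ≤ σ.C j := le_C σ hx1 hx1j
    have hCl : y0.2.2.2 + s + p y0.2.1 ≤ σ.C y0.2.1 := by
      have h := le_C σ hy0 rfl
      rwa [hql0] at h
    linarith [hBf, hpj, hCj, hCl]

lemma part1 (hp : ∀ j, 0 < p j) (hs : 0 < s) (σ : Schedule 2 n p s)
    (hopt : ∀ σ' : Schedule 2 n p s, σ.total ≤ σ'.total) (hSPT : σ.SPTProperty)
    (j k : Fin n) (hjk : j < k) (h2j : σ.TwoJob j) (h2k : σ.TwoJob k)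
    (hone : ∀ l : Fin n, j < l → l < k → σ.OneJob l)
    (hex : ∃ l : Fin n, j < l ∧ l < k) :
    ∀ i : Fin 2, ∃ x ∈ σ.parts, x.1 = i ∧ j < x.2.1 ∧ x.2.1 < k := by
  classical
  by_contra hcon
  push_neg at hcon
  obtain ⟨i, hi⟩ := hcon
  set i' : Fin 2 := if i = 0 then 1 else 0 with hi'def
  have hii' : i' ≠ i := fin2_ne i
  have hmach : ∀ m : Fin 2, m = i ∨ m = i' := fun m => fin2_cases i m
  have hine : ¬ (i = i') := fun hh => hii' hh.symm
  obtain ⟨a1, ha1, ha1j, ha1m⟩ := h2j i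
  obtain ⟨a2, ha2, ha2j, ha2m⟩ := h2j i'
  obtain ⟨b1, hb1, hb1j, hb1m⟩ := h2k i
  obtain ⟨b2, hb2, hb2j, hb2m⟩ := h2k i'
  have pairsum : ∀ (jb : Fin n) (x y : Fin 2 × Fin n × ℝ × ℝ),
      x ∈ σ.parts → y ∈ σ.parts → x.2.1 = jb → y.2.1 = jb → x.1 = i → y.1 = i' →
      p jb = x.2.2.1 + y.2.2.1 := by
    intro jb x y hx hy hxj hyj hxm hym
    have hxy : x ≠ y := fun h => hii' (by rw [← hym, ← h, hxm])
    have hfil : σ.parts.filter (fun z => z.2.1 = jb) = {x, y} := by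
      ext w
      simp only [Finset.mem_filter, Finset.mem_insert, Finset.mem_singleton]
      constructor
      · rintro ⟨hw, hwj⟩
        rcases hmach w.1 with hm | hm
        · left; exact hSPT.1 w hw x hx (hm.trans hxm.symm) (hwj.trans hxj.symm)
        · right; exact hSPT.1 w hw y hy (hm.trans hym.symm) (hwj.trans hyj.symm)
      · rintro (rfl | rfl)
        · exact ⟨hx, hxj⟩
        · exact ⟨hy, hyj⟩
    have h := σ.sum_q jb
    rw [hfil, Finset.sum_pair hxy] at h
    exact h.symm
  have hpj := pairsum j a1 a2 ha1 ha2 ha1j ha2j ha1m ha2m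
  have hpk := pairsum k b1 b2 hb1 hb2 hb1j hb2j hb1m hb2m
  have hqa1 := σ.q_pos a1 ha1
  have hqa2 := σ.q_pos a2 ha2
  have hqb1 := σ.q_pos b1 hb1
  have hqb2 := σ.q_pos b2 hb2
  have hta1 := σ.t_nonneg a1 ha1
  have hta2 := σ.t_nonneg a2 ha2
  have htb1 := σ.t_nonneg b1 hb1
  have htb2 := σ.t_nonneg b2 hb2
  have hfA : a1.2.2.2 + s + a1.2.2.1 ≤ b1.2.2.2 :=
    ordered σ hs hSPT ha1 hb1 (ha1m.trans hb1m.symm) (by rw [ha1j, hb1j]; exact hjk)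
  have hf'D : a2.2.2.2 + s + a2.2.2.1 ≤ b2.2.2.2 :=
    ordered σ hs hSPT ha2 hb2 (ha2m.trans hb2m.symm) (by rw [ha2j, hb2j]; exact hjk)
  -- every job strictly between j and k has its (unique) part on machine i'
  have hgap : ∀ l : Fin n, j < l → l < k →
      ∃ y, y ∈ σ.parts ∧ y.1 = i' ∧ y.2.1 = l ∧ y.2.2.1 = p l := by
    intro l h1 h2
    obtain ⟨mm, hmm⟩ := hone l h1 h2
    obtain ⟨y, hy, hyj⟩ := exists_part σ hp l
    have hym : y.1 = i' := by
      rcases hmach y.1 with hmi | hmi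
      · exact absurd (hi y hy hmi (hyj ▸ h1)) (not_le.2 (hyj ▸ h2))
      · exact hmi
    have hfil : σ.parts.filter (fun x => x.2.1 = l) = {y} := by
      ext w
      simp only [Finset.mem_filter, Finset.mem_singleton]
      constructor
      · rintro ⟨hw, hwj⟩
        have hwm : w.1 = i' := by
          rcases hmach w.1 with hmi | hmi
          · exact absurd (hi w hw hmi (hwj ▸ h1)) (not_le.2 (hwj ▸ h2))
          · exact hmi
        exact hSPT.1 w hw y hy (hwm.trans hym.symm) (hwj.trans hyj.symm)
      · rintro rfl
        exact ⟨hy, hyj⟩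
    have h := σ.sum_q l
    rw [hfil, Finset.sum_singleton] at h
    exact ⟨y, hy, hym, hyj, hyj ▸ h⟩
  -- the chain bound on machine i' : parts of jobs in (j, k] start after
  -- j's part plus all gap parts of smaller index
  have chain : ∀ m : ℕ, ∀ y, y ∈ σ.parts → y.1 = i' → j < y.2.1 → y.2.1 ≤ k →
      y.2.1.val = m →
      a2.2.2.2 + s + a2.2.2.1 + ∑ l ∈ Finset.Ioo j y.2.1, (s + p l) ≤ y.2.2.2 := by
    intro m
    induction m using Nat.strong_induction_on with
    | _ m IH =>
      intro y hy hym hyj hyk hmv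
      rcases (Finset.Ioo j y.2.1).eq_empty_or_nonempty with he | hne
      · rw [he, Finset.sum_empty, add_zero]
        exact ordered σ hs hSPT ha2 hy (ha2m.trans hym.symm) (by rw [ha2j]; exact hyj)
      · set l0 := (Finset.Ioo j y.2.1).max' hne with hl0
        have hl0mem : l0 ∈ Finset.Ioo j y.2.1 := (Finset.Ioo j y.2.1).max'_mem hne
        have hl0j : j < l0 := (Finset.mem_Ioo.1 hl0mem).1
        have hl0y : l0 < y.2.1 := (Finset.mem_Ioo.1 hl0mem).2
        have hl0k : l0 < k := lt_of_lt_of_le hl0y hyk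
        obtain ⟨g, hg, hgm, hgj, hgq⟩ := hgap l0 hl0j hl0k
        have hIH : a2.2.2.2 + s + a2.2.2.1 + ∑ l ∈ Finset.Ioo j g.2.1, (s + p l) ≤ g.2.2.2 := by
          apply IH g.2.1.val ?_ g hg hgm (by rw [hgj]; exact hl0j)
            (by rw [hgj]; exact le_of_lt hl0k) rfl
          rw [hgj, ← hmv]
          exact hl0y
        have hord : g.2.2.2 + s + g.2.2.1 ≤ y.2.2.2 :=
          ordered σ hs hSPT hg hy (hgm.trans hym.symm) (by rw [hgj]; exact hl0y)
        have hins : Finset.Ioo j y.2.1 = insert l0 (Finset.Ioo j l0) := by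
          ext a
          simp only [Finset.mem_Ioo, Finset.mem_insert]
          constructor
          · rintro ⟨h1, h2⟩
            rcases eq_or_lt_of_le (Finset.le_max' _ a (Finset.mem_Ioo.2 ⟨h1, h2⟩)) with h3 | h3
            · exact Or.inl h3
            · exact Or.inr ⟨h1, h3⟩
          · rintro (rfl | ⟨h1, h2⟩)
            · exact ⟨hl0j, hl0y⟩
            · exact ⟨h1, lt_trans h2 hl0y⟩
        rw [hins, Finset.sum_insert (by simp)]
        have hgx : Finset.Ioo j g.2.1 = Finset.Ioo j l0 := by rw [hgj]
        rw [hgx] at hIH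
        linarith
  have hchainD : a2.2.2.2 + s + a2.2.2.1 + ∑ l ∈ Finset.Ioo j k, (s + p l) ≤ b2.2.2.2 := by
    have h := chain b2.2.1.val b2 hb2 hb2m (by rw [hb2j]; exact hjk)
      (by rw [hb2j]) rfl
    rwa [hb2j] at h
  have pmono : ∀ l mm : Fin n, j < l → l < mm →
      (∑ l' ∈ Finset.Ioo j l, (s + p l')) + (s + p l) ≤ ∑ l' ∈ Finset.Ioo j mm, (s + p l') := by
    intro l mm hjl hlm
    have hsub : insert l (Finset.Ioo j l) ⊆ Finset.Ioo j mm := by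
      intro a ha
      rcases Finset.mem_insert.1 ha with rfl | ha
      · exact Finset.mem_Ioo.2 ⟨hjl, hlm⟩
      · have h := Finset.mem_Ioo.1 ha
        exact Finset.mem_Ioo.2 ⟨h.1, lt_trans h.2 hlm⟩
    calc (∑ l' ∈ Finset.Ioo j l, (s + p l')) + (s + p l)
        = ∑ l' ∈ insert l (Finset.Ioo j l), (s + p l') := by
          rw [Finset.sum_insert (by simp)]; ring
      _ ≤ _ := Finset.sum_le_sum_of_subset_of_nonneg hsub
          (fun a _ _ => le_of_lt (by linarith [hp a]))
  have psnn : ∀ mm : Fin n, 0 ≤ ∑ l' ∈ Finset.Ioo j mm, (s + p l') :=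
    fun mm => Finset.sum_nonneg (fun a _ => le_of_lt (by linarith [hp a]))
  have chi : ∀ y, y ∈ σ.parts → y.1 = i → y.2.1 ∉ Finset.Icc j k →
      y.2.2.2 + s + y.2.2.1 ≤ a1.2.2.2 ∨ b1.2.2.2 + s + b1.2.2.1 ≤ y.2.2.2 := by
    intro y hy hym hyI
    rcases lt_or_ge y.2.1 j with h | h
    · left; exact ordered σ hs hSPT hy ha1 (hym.trans ha1m.symm) (by rw [ha1j]; exact h)
    · have hky : k < y.2.1 := by
        by_contra hc
        push_neg at hc
        exact hyI (Finset.mem_Icc.2 ⟨h, hc⟩)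
      right; exact ordered σ hs hSPT hb1 hy (hb1m.trans hym.symm) (by rw [hb1j]; exact hky)
  have chi' : ∀ y, y ∈ σ.parts → y.1 = i' → y.2.1 ∉ Finset.Icc j k →
      y.2.2.2 + s + y.2.2.1 ≤ a2.2.2.2 ∨ b2.2.2.2 + s + b2.2.2.1 ≤ y.2.2.2 := by
    intro y hy hym hyI
    rcases lt_or_ge y.2.1 j with h | h
    · left; exact ordered σ hs hSPT hy ha2 (hym.trans ha2m.symm) (by rw [ha2j]; exact h)
    · have hky : k < y.2.1 := by
        by_contra hc
        push_neg at hc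
        exact hyI (Finset.mem_Icc.2 ⟨h, hc⟩)
      right; exact ordered σ hs hSPT hb2 hy (hb2m.trans hym.symm) (by rw [hb2j]; exact hky)
  obtain ⟨l1, hl1j, hl1k⟩ := hex
  have hIoone : (Finset.Ioo j k).Nonempty := ⟨l1, Finset.mem_Ioo.2 ⟨hl1j, hl1k⟩⟩
  have hIcc : Finset.Icc j k = insert j (insert k (Finset.Ioo j k)) := by
    ext a
    simp only [Finset.mem_Icc, Finset.mem_insert, Finset.mem_Ioo]
    constructor
    · rintro ⟨h1, h2⟩
      rcases eq_or_lt_of_le h1 with h3 | h3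
      · exact Or.inl h3.symm
      · rcases eq_or_lt_of_le h2 with h4 | h4
        · exact Or.inr (Or.inl h4)
        · exact Or.inr (Or.inr ⟨h3, h4⟩)
    · rintro (rfl | rfl | ⟨h1, h2⟩)
      · exact ⟨le_refl _, le_of_lt hjk⟩
      · exact ⟨le_of_lt hjk, le_refl _⟩
      · exact ⟨le_of_lt h1, le_of_lt h2⟩
  have hjnotmem : j ∉ insert k (Finset.Ioo j k) := by simp [hjk.ne]
  have hknotmem : k ∉ Finset.Ioo j k := by simp
  by_cases hfit : a1.2.2.2 + s + p j ≤ b1.2.2.2 + s + b1.2.2.1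
  · -- MOVE A : job j is merged onto machine i, gap jobs are packed from the
    -- start of j's old part on machine i', job k is rebalanced.
    set capi : ℝ := b1.2.2.2 + s + b1.2.2.1 - (a1.2.2.2 + s + p j) - s with hcapidef
    set ci : ℝ := min (p k) (max 0 capi) with hcidef
    set c' : ℝ := p k - ci with hc'def
    set SG : ℝ := ∑ l ∈ Finset.Ioo j k, (s + p l) with hSGdef
    set Xj : Fin 2 × Fin n × ℝ × ℝ := (i, j, p j, a1.2.2.2) with hXjdef
    set Xg : Fin n → Fin 2 × Fin n × ℝ × ℝ :=
      fun l => (i', l, p l, a2.2.2.2 + ∑ l' ∈ Finset.Ioo j l, (s + p l')) with hXgdef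
    set Xki : Fin 2 × Fin n × ℝ × ℝ :=
      (i, k, ci, b1.2.2.2 + s + b1.2.2.1 - s - ci) with hXkidef
    set Xki' : Fin 2 × Fin n × ℝ × ℝ := (i', k, c', a2.2.2.2 + SG) with hXki'def
    set N : Finset (Fin 2 × Fin n × ℝ × ℝ) :=
      (insert Xj ((Finset.Ioo j k).image Xg)) ∪
        ((if 0 < ci then {Xki} else ∅) ∪ (if 0 < c' then {Xki'} else ∅)) with hN
    have hci0 : 0 ≤ ci := le_min (le_of_lt (hp k)) (le_max_left 0 capi)
    have hcipk : ci ≤ p k := min_le_left _ _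
    have hc'0 : 0 ≤ c' := by rw [hc'def]; linarith
    have hciCap : 0 < ci → ci ≤ capi := by
      intro h
      have h2 : 0 < max 0 capi := lt_of_lt_of_le h (min_le_right _ _)
      have h3 : max 0 capi = capi := by
        rcases le_or_gt capi 0 with hc | hc
        · rw [max_eq_left hc] at h2; exact absurd h2 (lt_irrefl 0)
        · exact max_eq_right (le_of_lt hc)
      rw [← h3]; exact min_le_right _ _
    have hciuq : b1.2.2.1 - a2.2.2.1 ≤ ci := by
      rcases le_or_gt b1.2.2.1 a2.2.2.1 with h | h
      · linarith
      · have h1 : b1.2.2.1 - a2.2.2.1 ≤ capi := by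
          rw [hcapidef]; linarith [hfA, hpj]
        exact le_min (by linarith [hqb2, hpk]) (le_trans h1 (le_max_right 0 capi))
    have hc'bound : c' ≤ a2.2.2.1 + b2.2.2.1 := by
      rw [hc'def]; linarith [hciuq, hpk]
    have hCap' : a2.2.2.2 + SG + s + c' ≤ b2.2.2.2 + s + b2.2.2.1 := by
      linarith [hchainD, hc'bound, hqa2, hs]
    have hXkist : 0 < ci → a1.2.2.2 + s + p j ≤ b1.2.2.2 + s + b1.2.2.1 - s - ci := by
      intro h
      have := hciCap h
      rw [hcapidef] at this
      linarith
    have hXkine : Xki ≠ Xki' := fun h => hii' (congrArg Prod.fst h).symm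
    have hmemN : ∀ x, x ∈ N ↔ x = Xj ∨ (∃ l, (j < l ∧ l < k) ∧ x = Xg l)
        ∨ (0 < ci ∧ x = Xki) ∨ (0 < c' ∧ x = Xki') := by
      intro x
      rw [hN]
      constructor
      · intro hx
        rcases Finset.mem_union.1 hx with hx | hx
        · rcases Finset.mem_insert.1 hx with rfl | hx
          · exact Or.inl rfl
          · obtain ⟨l, hl, rfl⟩ := Finset.mem_image.1 hx
            exact Or.inr (Or.inl ⟨l, Finset.mem_Ioo.1 hl, rfl⟩)
        · rcases Finset.mem_union.1 hx with hx | hx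
          · split_ifs at hx with h
            · exact Or.inr (Or.inr (Or.inl ⟨h, Finset.mem_singleton.1 hx⟩))
            · exact absurd hx (Finset.notMem_empty x)
          · split_ifs at hx with h
            · exact Or.inr (Or.inr (Or.inr ⟨h, Finset.mem_singleton.1 hx⟩))
            · exact absurd hx (Finset.notMem_empty x)
      · rintro (rfl | ⟨l, hl, rfl⟩ | ⟨h0, rfl⟩ | ⟨h0, rfl⟩)
        · exact Finset.mem_union.2 (Or.inl (Finset.mem_insert_self _ _))
        · exact Finset.mem_union.2 (Or.inl (Finset.mem_insert.2 (Or.inr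
            (Finset.mem_image.2 ⟨l, Finset.mem_Ioo.2 hl, rfl⟩))))
        · exact Finset.mem_union.2 (Or.inr (Finset.mem_union.2 (Or.inl (by
            rw [if_pos h0]; exact Finset.mem_singleton_self _))))
        · exact Finset.mem_union.2 (Or.inr (Finset.mem_union.2 (Or.inr (by
            rw [if_pos h0]; exact Finset.mem_singleton_self _))))
    have e2 : ∀ l : Fin n, j < l → l < k →
        a2.2.2.2 + (∑ l' ∈ Finset.Ioo j l, (s + p l')) + s + p l ≤ a2.2.2.2 + SG := by
      intro l h1 h2
      have := pmono l k h1 h2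
      rw [hSGdef]; linarith
    have e3 : ∀ l l' : Fin n, j < l → l < l' →
        a2.2.2.2 + (∑ l'' ∈ Finset.Ioo j l, (s + p l'')) + s + p l
          ≤ a2.2.2.2 + ∑ l'' ∈ Finset.Ioo j l', (s + p l'') := by
      intro l l' h1 h2
      have := pmono l l' h1 h2
      linarith
    apply no_improve σ hp hopt (Finset.Icc j k) N
      (fun jb => if jb = j then a1.2.2.2 + s + p j else if jb = k then σ.C k
        else a2.2.2.2 + (∑ l' ∈ Finset.Ioo j jb, (s + p l')) + s + p jb)
    · -- q_pos
      intro x hx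
      rcases (hmemN x).1 hx with rfl | ⟨l, hl, rfl⟩ | ⟨h0, rfl⟩ | ⟨h0, rfl⟩
      · exact hp j
      · exact hp l
      · exact h0
      · exact h0
    · -- t_nonneg
      intro x hx
      rcases (hmemN x).1 hx with rfl | ⟨l, hl, rfl⟩ | ⟨h0, rfl⟩ | ⟨h0, rfl⟩
      · exact hta1
      · exact add_nonneg hta2 (psnn l)
      · show 0 ≤ b1.2.2.2 + s + b1.2.2.1 - s - ci
        have := hXkist h0
        linarith [hp j, hs, hta1]
      · show 0 ≤ a2.2.2.2 + SG
        have := psnn k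
        rw [hSGdef]; linarith
    · -- jobs in J
      intro x hx
      rcases (hmemN x).1 hx with rfl | ⟨l, hl, rfl⟩ | ⟨h0, rfl⟩ | ⟨h0, rfl⟩
      · exact Finset.mem_Icc.2 ⟨le_refl j, le_of_lt hjk⟩
      · exact Finset.mem_Icc.2 ⟨le_of_lt hl.1, le_of_lt hl.2⟩
      · exact Finset.mem_Icc.2 ⟨le_of_lt hjk, le_refl k⟩
      · exact Finset.mem_Icc.2 ⟨le_of_lt hjk, le_refl k⟩
    · -- sums per job
      intro jb hjb
      rw [hIcc] at hjb
      rcases Finset.mem_insert.1 hjb with rfl | hjb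
      · have hfil : N.filter (fun x => x.2.1 = jb) = {Xj} := by
          ext x
          simp only [Finset.mem_filter, hmemN, Finset.mem_singleton]
          constructor
          · rintro ⟨rfl | ⟨l, hl, rfl⟩ | ⟨h0, rfl⟩ | ⟨h0, rfl⟩, hj2⟩
            · rfl
            · exact absurd hj2 (ne_of_gt hl.1)
            · exact absurd hj2 (ne_of_gt hjk)
            · exact absurd hj2 (ne_of_gt hjk)
          · rintro rfl
            exact ⟨Or.inl rfl, rfl⟩
        rw [hfil, Finset.sum_singleton]
      rcases Finset.mem_insert.1 hjb with rfl | hjb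
      · -- jb = k
        rcases lt_or_ge 0 ci with hcip | hcip
        · rcases lt_or_ge 0 c' with hc'p | hc'p
          · have hfil : N.filter (fun x => x.2.1 = jb) = {Xki, Xki'} := by
              ext x
              simp only [Finset.mem_filter, hmemN, Finset.mem_insert,
                Finset.mem_singleton]
              constructor
              · rintro ⟨rfl | ⟨l, hl, rfl⟩ | ⟨h0, rfl⟩ | ⟨h0, rfl⟩, hj2⟩
                · exact absurd hj2 (ne_of_lt hjk)
                · exact absurd hj2 (ne_of_lt hl.2)
                · exact Or.inl rfl
                · exact Or.inr rfl
              · rintro (rfl | rfl)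
                · exact ⟨Or.inr (Or.inr (Or.inl ⟨hcip, rfl⟩)), rfl⟩
                · exact ⟨Or.inr (Or.inr (Or.inr ⟨hc'p, rfl⟩)), rfl⟩
            rw [hfil, Finset.sum_pair hXkine]
            show ci + c' = p jb
            rw [hc'def]; ring
          · have hc'z : c' = 0 := le_antisymm hc'p hc'0
            have hfil : N.filter (fun x => x.2.1 = jb) = {Xki} := by
              ext x
              simp only [Finset.mem_filter, hmemN, Finset.mem_singleton]
              constructor
              · rintro ⟨rfl | ⟨l, hl, rfl⟩ | ⟨h0, rfl⟩ | ⟨h0, rfl⟩, hj2⟩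
                · exact absurd hj2 (ne_of_lt hjk)
                · exact absurd hj2 (ne_of_lt hl.2)
                · rfl
                · exact absurd h0 (by rw [hc'z]; exact lt_irrefl 0)
              · rintro rfl
                exact ⟨Or.inr (Or.inr (Or.inl ⟨hcip, rfl⟩)), rfl⟩
            rw [hfil, Finset.sum_singleton]
            show ci = p jb
            have : c' = p jb - ci := hc'def
            linarith
        · have hciz : ci = 0 := le_antisymm hcip hci0
          have hc'p : 0 < c' := by rw [hc'def, hciz]; linarith [hp jb]
          have hfil : N.filter (fun x => x.2.1 = jb) = {Xki'} := by
            ext x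
            simp only [Finset.mem_filter, hmemN, Finset.mem_singleton]
            constructor
            · rintro ⟨rfl | ⟨l, hl, rfl⟩ | ⟨h0, rfl⟩ | ⟨h0, rfl⟩, hj2⟩
              · exact absurd hj2 (ne_of_lt hjk)
              · exact absurd hj2 (ne_of_lt hl.2)
              · exact absurd h0 (by rw [hciz]; exact lt_irrefl 0)
              · rfl
            · rintro rfl
              exact ⟨Or.inr (Or.inr (Or.inr ⟨hc'p, rfl⟩)), rfl⟩
          rw [hfil, Finset.sum_singleton]
          show c' = p jb
          rw [hc'def, hciz]; ring
      · -- jb a gap job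
        have hjbmem := Finset.mem_Ioo.1 hjb
        have hfil : N.filter (fun x => x.2.1 = jb) = {Xg jb} := by
          ext x
          simp only [Finset.mem_filter, hmemN, Finset.mem_singleton]
          constructor
          · rintro ⟨rfl | ⟨l, hl, rfl⟩ | ⟨h0, rfl⟩ | ⟨h0, rfl⟩, hj2⟩
            · exact absurd hj2.symm (ne_of_gt hjbmem.1)
            · have : l = jb := hj2
              rw [this]
            · exact absurd hj2 (ne_of_gt hjbmem.2)
            · exact absurd hj2 (ne_of_gt hjbmem.2)
          · rintro rfl
            exact ⟨Or.inr (Or.inl ⟨jb, hjbmem, rfl⟩), rfl⟩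
        rw [hfil, Finset.sum_singleton]
    · -- internal disjointness of the new parts
      intro x hx y hy hne hm
      rcases (hmemN x).1 hx with rfl | ⟨l, hl, rfl⟩ | ⟨h0, rfl⟩ | ⟨h0, rfl⟩ <;>
        rcases (hmemN y).1 hy with rfl | ⟨l', hl', rfl⟩ | ⟨h0', rfl⟩ | ⟨h0', rfl⟩
      · exact absurd rfl hne
      · exact absurd (show (i : Fin 2) = i' from hm) hine
      · left
        show a1.2.2.2 + s + p j ≤ b1.2.2.2 + s + b1.2.2.1 - s - ci
        exact hXkist h0'
      · exact absurd (show (i : Fin 2) = i' from hm) hine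
      · exact absurd (show (i' : Fin 2) = i from hm) hii'
      · rcases lt_trichotomy l l' with hll | hll | hll
        · left
          show a2.2.2.2 + (∑ l'' ∈ Finset.Ioo j l, (s + p l'')) + s + p l
            ≤ a2.2.2.2 + ∑ l'' ∈ Finset.Ioo j l', (s + p l'')
          exact e3 l l' hl.1 hll
        · exact absurd (by rw [hll]) hne
        · right
          show a2.2.2.2 + (∑ l'' ∈ Finset.Ioo j l', (s + p l'')) + s + p l'
            ≤ a2.2.2.2 + ∑ l'' ∈ Finset.Ioo j l, (s + p l'')
          exact e3 l' l hl'.1 hll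
      · exact absurd (show (i' : Fin 2) = i from hm) hii'
      · left
        show a2.2.2.2 + (∑ l'' ∈ Finset.Ioo j l, (s + p l'')) + s + p l
          ≤ a2.2.2.2 + SG
        exact e2 l hl.1 hl.2
      · right
        show a1.2.2.2 + s + p j ≤ b1.2.2.2 + s + b1.2.2.1 - s - ci
        exact hXkist h0
      · exact absurd (show (i : Fin 2) = i' from hm) hine
      · exact absurd rfl hne
      · exact absurd (show (i : Fin 2) = i' from hm) hine
      · exact absurd (show (i' : Fin 2) = i from hm) hii'
      · right
        show a2.2.2.2 + (∑ l'' ∈ Finset.Ioo j l', (s + p l'')) + s + p l'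
          ≤ a2.2.2.2 + SG
        exact e2 l' hl'.1 hl'.2
      · exact absurd (show (i' : Fin 2) = i from hm) hii'
      · exact absurd rfl hne
    · -- disjointness with the kept parts
      intro x hx y hy hyJ hm
      rcases (hmemN x).1 hx with rfl | ⟨l, hl, rfl⟩ | ⟨h0, rfl⟩ | ⟨h0, rfl⟩
      · have hym : y.1 = i := hm.symm
        rcases chi y hy hym hyJ with h | h
        · right
          show y.2.2.2 + s + y.2.2.1 ≤ a1.2.2.2
          exact h
        · left
          show a1.2.2.2 + s + p j ≤ y.2.2.2
          linarith [hfit]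
      · have hym : y.1 = i' := hm.symm
        rcases chi' y hy hym hyJ with h | h
        · right
          show y.2.2.2 + s + y.2.2.1
            ≤ a2.2.2.2 + ∑ l' ∈ Finset.Ioo j l, (s + p l')
          linarith [psnn l]
        · left
          show a2.2.2.2 + (∑ l' ∈ Finset.Ioo j l, (s + p l')) + s + p l ≤ y.2.2.2
          have h2 := e2 l hl.1 hl.2
          rw [hSGdef] at h2
          linarith [hchainD, hqa2, hqb2, hs]
      · have hym : y.1 = i := hm.symm
        rcases chi y hy hym hyJ with h | h
        · right
          show y.2.2.2 + s + y.2.2.1 ≤ b1.2.2.2 + s + b1.2.2.1 - s - ci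
          have := hXkist h0
          linarith [hp j, hs]
        · left
          show b1.2.2.2 + s + b1.2.2.1 - s - ci + s + ci ≤ y.2.2.2
          linarith
      · have hym : y.1 = i' := hm.symm
        rcases chi' y hy hym hyJ with h | h
        · right
          show y.2.2.2 + s + y.2.2.1 ≤ a2.2.2.2 + SG
          have := psnn k
          rw [hSGdef]
          linarith
        · left
          show a2.2.2.2 + SG + s + c' ≤ y.2.2.2
          linarith [hCap']
    · -- the completion-time bounds
      intro x hx
      rcases (hmemN x).1 hx with rfl | ⟨l, hl, rfl⟩ | ⟨h0, rfl⟩ | ⟨h0, rfl⟩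
      · show a1.2.2.2 + s + p j
          ≤ if (j : Fin n) = j then a1.2.2.2 + s + p j else _
        rw [if_pos rfl]
      · show a2.2.2.2 + (∑ l' ∈ Finset.Ioo j l, (s + p l')) + s + p l
          ≤ if l = j then a1.2.2.2 + s + p j else if l = k then σ.C k
            else a2.2.2.2 + (∑ l' ∈ Finset.Ioo j l, (s + p l')) + s + p l
        rw [if_neg (ne_of_gt hl.1), if_neg (ne_of_lt hl.2)]
      · show b1.2.2.2 + s + b1.2.2.1 - s - ci + s + ci
          ≤ if (k : Fin n) = j then a1.2.2.2 + s + p j else if (k : Fin n) = k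
            then σ.C k else _
        rw [if_neg (ne_of_gt hjk), if_pos rfl]
        have := le_C σ hb1 hb1j
        linarith
      · show a2.2.2.2 + SG + s + c'
          ≤ if (k : Fin n) = j then a1.2.2.2 + s + p j else if (k : Fin n) = k
            then σ.C k else _
        rw [if_neg (ne_of_gt hjk), if_pos rfl]
        have := le_C σ hb2 hb2j
        linarith [hCap']
    · -- strict improvement
      rw [hIcc, Finset.sum_insert hjnotmem, Finset.sum_insert hknotmem,
        Finset.sum_insert hjnotmem, Finset.sum_insert hknotmem,
        if_pos rfl, if_neg (ne_of_gt hjk), if_pos rfl]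
      have hCj : a1.2.2.2 + s + a1.2.2.1 ≤ σ.C j := le_C σ ha1 ha1j
      have hgsum : ∑ l ∈ Finset.Ioo j k,
          (if l = j then a1.2.2.2 + s + p j else if l = k then σ.C k
            else a2.2.2.2 + (∑ l' ∈ Finset.Ioo j l, (s + p l')) + s + p l)
          ≤ ∑ l ∈ Finset.Ioo j k, (σ.C l - (s + a2.2.2.1)) := by
        apply Finset.sum_le_sum
        intro l hl
        have hlm := Finset.mem_Ioo.1 hl
        rw [if_neg (ne_of_gt hlm.1), if_neg (ne_of_lt hlm.2)]
        obtain ⟨g, hg, hgm, hgj2, hgq2⟩ := hgap l hlm.1 hlm.2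
        have hcg : a2.2.2.2 + s + a2.2.2.1 + ∑ l' ∈ Finset.Ioo j g.2.1, (s + p l')
            ≤ g.2.2.2 := chain g.2.1.val g hg hgm (by rw [hgj2]; exact hlm.1)
          (by rw [hgj2]; exact le_of_lt hlm.2) rfl
        have hgx : Finset.Ioo j g.2.1 = Finset.Ioo j l := by rw [hgj2]
        rw [hgx] at hcg
        have hCl : g.2.2.2 + s + g.2.2.1 ≤ σ.C l := le_C σ hg hgj2
        rw [hgq2] at hCl
        linarith
      have hsplit : ∑ l ∈ Finset.Ioo j k, (σ.C l - (s + a2.2.2.1))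
          = (∑ l ∈ Finset.Ioo j k, σ.C l)
            - (Finset.Ioo j k).card * (s + a2.2.2.1) := by
        rw [Finset.sum_sub_distrib, Finset.sum_const, nsmul_eq_mul]
      have hcard : (1 : ℝ) ≤ (Finset.Ioo j k).card := by
        have := Finset.card_pos.2 hIoone
        exact_mod_cast this
      have hcardmul : s + a2.2.2.1 ≤ (Finset.Ioo j k).card * (s + a2.2.2.1) := by
        nlinarith [hcard, hs, hqa2]
      linarith [hgsum, hsplit, hCj, hpj]
  · -- MOVE Γ : job j absorbs the slot of k's part on machine i, job k is
    -- merged onto machine i', gap jobs are packed after j's shortened part.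
    push_neg at hfit
    set w : ℝ := b1.2.2.2 + s + b1.2.2.1 - (a1.2.2.2 + s + a1.2.2.1) with hwdef
    set base : ℝ := a2.2.2.2 + s + a2.2.2.1 - w with hbasedef
    set SG : ℝ := ∑ l ∈ Finset.Ioo j k, (s + p l) with hSGdef
    have hwpos : 0 < w := by rw [hwdef]; linarith [hfA, hs, hqb1]
    have hwu : b1.2.2.1 + s ≤ w := by rw [hwdef]; linarith [hfA]
    have hwq2 : w < a2.2.2.1 := by rw [hwdef]; linarith [hfit, hpj]
    have hbase_t2 : a2.2.2.2 < base := by rw [hbasedef]; linarith [hs, hwq2]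
    have hbase0 : 0 ≤ base := le_of_lt (lt_of_le_of_lt hta2 hbase_t2)
    have hYkend : base + SG + s + p k ≤ b2.2.2.2 + s + b2.2.2.1 := by
      rw [hbasedef]
      linarith [hpk, hwu, hchainD]
    set Yj1 : Fin 2 × Fin n × ℝ × ℝ := (i, j, a1.2.2.1 + w, a1.2.2.2) with hYj1def
    set Yj2 : Fin 2 × Fin n × ℝ × ℝ := (i', j, a2.2.2.1 - w, a2.2.2.2) with hYj2def
    set Yg : Fin n → Fin 2 × Fin n × ℝ × ℝ :=
      fun l => (i', l, p l, base + ∑ l' ∈ Finset.Ioo j l, (s + p l')) with hYgdef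
    set Yk : Fin 2 × Fin n × ℝ × ℝ := (i', k, p k, base + SG) with hYkdef
    set N : Finset (Fin 2 × Fin n × ℝ × ℝ) :=
      insert Yj1 (insert Yj2 (insert Yk ((Finset.Ioo j k).image Yg))) with hN
    have hYj1Yj2 : Yj1 ≠ Yj2 := fun h => hine (congrArg Prod.fst h)
    have hYj2Yk : Yj2 ≠ Yk :=
      fun h => (ne_of_lt hjk) (congrArg (fun z : Fin 2 × Fin n × ℝ × ℝ => z.2.1) h)
    have hmemN : ∀ x, x ∈ N ↔ x = Yj1 ∨ x = Yj2 ∨ x = Yk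
        ∨ ∃ l, (j < l ∧ l < k) ∧ x = Yg l := by
      intro x
      rw [hN]
      simp only [Finset.mem_insert, Finset.mem_image, Finset.mem_Ioo]
      constructor
      · rintro (rfl | rfl | rfl | ⟨l, hl, rfl⟩)
        · exact Or.inl rfl
        · exact Or.inr (Or.inl rfl)
        · exact Or.inr (Or.inr (Or.inl rfl))
        · exact Or.inr (Or.inr (Or.inr ⟨l, hl, rfl⟩))
      · rintro (rfl | rfl | rfl | ⟨l, hl, rfl⟩)
        · exact Or.inl rfl
        · exact Or.inr (Or.inl rfl)
        · exact Or.inr (Or.inr (Or.inl rfl))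
        · exact Or.inr (Or.inr (Or.inr ⟨l, hl, rfl⟩))
    apply no_improve σ hp hopt (Finset.Icc j k) N
      (fun jb => if jb = j then max (b1.2.2.2 + s + b1.2.2.1) base
        else if jb = k then base + SG + s + p k
        else base + (∑ l' ∈ Finset.Ioo j jb, (s + p l')) + s + p jb)
    · -- q_pos
      intro x hx
      rcases (hmemN x).1 hx with rfl | rfl | rfl | ⟨l, hl, rfl⟩
      · show 0 < a1.2.2.1 + w
        linarith
      · show 0 < a2.2.2.1 - w
        linarith [hwq2]
      · exact hp k
      · exact hp l
    · -- t_nonneg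
      intro x hx
      rcases (hmemN x).1 hx with rfl | rfl | rfl | ⟨l, hl, rfl⟩
      · exact hta1
      · exact hta2
      · show 0 ≤ base + SG
        have := psnn k
        rw [hSGdef]
        linarith [hbase0]
      · exact add_nonneg hbase0 (psnn l)
    · -- jobs in J
      intro x hx
      rcases (hmemN x).1 hx with rfl | rfl | rfl | ⟨l, hl, rfl⟩
      · exact Finset.mem_Icc.2 ⟨le_refl j, le_of_lt hjk⟩
      · exact Finset.mem_Icc.2 ⟨le_refl j, le_of_lt hjk⟩
      · exact Finset.mem_Icc.2 ⟨le_of_lt hjk, le_refl k⟩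
      · exact Finset.mem_Icc.2 ⟨le_of_lt hl.1, le_of_lt hl.2⟩
    · -- sums per job
      intro jb hjb
      rw [hIcc] at hjb
      rcases Finset.mem_insert.1 hjb with rfl | hjb
      · have hfil : N.filter (fun x => x.2.1 = jb) = {Yj1, Yj2} := by
          ext x
          simp only [Finset.mem_filter, hmemN, Finset.mem_insert, Finset.mem_singleton]
          constructor
          · rintro ⟨rfl | rfl | rfl | ⟨l, hl, rfl⟩, hj2⟩
            · exact Or.inl rfl
            · exact Or.inr rfl
            · exact absurd hj2 (ne_of_gt hjk)
            · exact absurd hj2 (ne_of_gt hl.1)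
          · rintro (rfl | rfl)
            · exact ⟨Or.inl rfl, rfl⟩
            · exact ⟨Or.inr (Or.inl rfl), rfl⟩
        rw [hfil, Finset.sum_pair hYj1Yj2]
        show a1.2.2.1 + w + (a2.2.2.1 - w) = p jb
        linarith [hpj]
      rcases Finset.mem_insert.1 hjb with rfl | hjb
      · have hfil : N.filter (fun x => x.2.1 = jb) = {Yk} := by
          ext x
          simp only [Finset.mem_filter, hmemN, Finset.mem_singleton]
          constructor
          · rintro ⟨rfl | rfl | rfl | ⟨l, hl, rfl⟩, hj2⟩
            · exact absurd hj2 (ne_of_lt hjk)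
            · exact absurd hj2 (ne_of_lt hjk)
            · rfl
            · exact absurd hj2 (ne_of_lt hl.2)
          · rintro rfl
            exact ⟨Or.inr (Or.inr (Or.inl rfl)), rfl⟩
        rw [hfil, Finset.sum_singleton]
      · have hjbmem := Finset.mem_Ioo.1 hjb
        have hfil : N.filter (fun x => x.2.1 = jb) = {Yg jb} := by
          ext x
          simp only [Finset.mem_filter, hmemN, Finset.mem_singleton]
          constructor
          · rintro ⟨rfl | rfl | rfl | ⟨l, hl, rfl⟩, hj2⟩
            · exact absurd hj2.symm (ne_of_gt hjbmem.1)
            · exact absurd hj2.symm (ne_of_gt hjbmem.1)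
            · exact absurd hj2 (ne_of_gt hjbmem.2)
            · have : l = jb := hj2
              rw [this]
          · rintro rfl
            exact ⟨Or.inr (Or.inr (Or.inr ⟨jb, hjbmem, rfl⟩)), rfl⟩
        rw [hfil, Finset.sum_singleton]
    · -- internal disjointness of the new parts
      intro x hx y hy hne hm
      rcases (hmemN x).1 hx with rfl | rfl | rfl | ⟨l, hl, rfl⟩ <;>
        rcases (hmemN y).1 hy with rfl | rfl | rfl | ⟨l', hl', rfl⟩
      · exact absurd rfl hne
      · exact absurd (show (i : Fin 2) = i' from hm) hine
      · exact absurd (show (i : Fin 2) = i' from hm) hine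
      · exact absurd (show (i : Fin 2) = i' from hm) hine
      · exact absurd (show (i' : Fin 2) = i from hm) hii'
      · exact absurd rfl hne
      · left
        show a2.2.2.2 + s + (a2.2.2.1 - w) ≤ base + SG
        have := psnn k
        rw [hSGdef, hbasedef]
        linarith
      · left
        show a2.2.2.2 + s + (a2.2.2.1 - w) ≤ base + ∑ l' ∈ Finset.Ioo j l', (s + p l')
        have := psnn l'
        rw [hbasedef]
        linarith
      · exact absurd (show (i' : Fin 2) = i from hm) hii'
      · right
        show a2.2.2.2 + s + (a2.2.2.1 - w) ≤ base + SG
        have := psnn k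
        rw [hSGdef, hbasedef]
        linarith
      · exact absurd rfl hne
      · right
        show base + (∑ l'' ∈ Finset.Ioo j l', (s + p l'')) + s + p l' ≤ base + SG
        have := pmono l' k hl'.1 hl'.2
        rw [hSGdef]
        linarith
      · exact absurd (show (i' : Fin 2) = i from hm) hii'
      · right
        show a2.2.2.2 + s + (a2.2.2.1 - w) ≤ base + ∑ l' ∈ Finset.Ioo j l, (s + p l')
        have := psnn l
        rw [hbasedef]
        linarith
      · left
        show base + (∑ l'' ∈ Finset.Ioo j l, (s + p l'')) + s + p l ≤ base + SG
        have := pmono l k hl.1 hl.2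
        rw [hSGdef]
        linarith
      · rcases lt_trichotomy l l' with hll | hll | hll
        · left
          show base + (∑ l'' ∈ Finset.Ioo j l, (s + p l'')) + s + p l
            ≤ base + ∑ l'' ∈ Finset.Ioo j l', (s + p l'')
          have := pmono l l' hl.1 hll
          linarith
        · exact absurd (by rw [hll]) hne
        · right
          show base + (∑ l'' ∈ Finset.Ioo j l', (s + p l'')) + s + p l'
            ≤ base + ∑ l'' ∈ Finset.Ioo j l, (s + p l'')
          have := pmono l' l hl'.1 hll
          linarith
    · -- disjointness with the kept parts
      intro x hx y hy hyJ hm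
      rcases (hmemN x).1 hx with rfl | rfl | rfl | ⟨l, hl, rfl⟩
      · have hym : y.1 = i := hm.symm
        rcases chi y hy hym hyJ with h | h
        · right
          show y.2.2.2 + s + y.2.2.1 ≤ a1.2.2.2
          exact h
        · left
          show a1.2.2.2 + s + (a1.2.2.1 + w) ≤ y.2.2.2
          rw [hwdef] at *
          linarith [h]
      · have hym : y.1 = i' := hm.symm
        rcases chi' y hy hym hyJ with h | h
        · right
          show y.2.2.2 + s + y.2.2.1 ≤ a2.2.2.2
          exact h
        · left
          show a2.2.2.2 + s + (a2.2.2.1 - w) ≤ y.2.2.2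
          linarith [h, hwpos, hf'D, hqb2, hs]
      · have hym : y.1 = i' := hm.symm
        rcases chi' y hy hym hyJ with h | h
        · right
          show y.2.2.2 + s + y.2.2.1 ≤ base + SG
          have := psnn k
          rw [hSGdef]
          linarith [hbase_t2]
        · left
          show base + SG + s + p k ≤ y.2.2.2
          linarith [hYkend, h]
      · have hym : y.1 = i' := hm.symm
        rcases chi' y hy hym hyJ with h | h
        · right
          show y.2.2.2 + s + y.2.2.1 ≤ base + ∑ l' ∈ Finset.Ioo j l, (s + p l')
          have := psnn l
          linarith [hbase_t2]
        · left
          show base + (∑ l' ∈ Finset.Ioo j l, (s + p l')) + s + p l ≤ y.2.2.2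
          have h2 := pmono l k hl.1 hl.2
          rw [hSGdef] at hYkend
          linarith [hYkend, h, hp k, hs]
    · -- the completion-time bounds
      intro x hx
      rcases (hmemN x).1 hx with rfl | rfl | rfl | ⟨l, hl, rfl⟩
      · show a1.2.2.2 + s + (a1.2.2.1 + w)
          ≤ if (j : Fin n) = j then max (b1.2.2.2 + s + b1.2.2.1) base else _
        rw [if_pos rfl]
        have := le_max_left (b1.2.2.2 + s + b1.2.2.1) base
        rw [hwdef]
        linarith
      · show a2.2.2.2 + s + (a2.2.2.1 - w)
          ≤ if (j : Fin n) = j then max (b1.2.2.2 + s + b1.2.2.1) base else _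
        rw [if_pos rfl]
        have := le_max_right (b1.2.2.2 + s + b1.2.2.1) base
        rw [hbasedef] at *
        linarith
      · show base + SG + s + p k
          ≤ if (k : Fin n) = j then max (b1.2.2.2 + s + b1.2.2.1) base
            else if (k : Fin n) = k then base + SG + s + p k else _
        rw [if_neg (ne_of_gt hjk), if_pos rfl]
      · show base + (∑ l' ∈ Finset.Ioo j l, (s + p l')) + s + p l
          ≤ if l = j then max (b1.2.2.2 + s + b1.2.2.1) base
            else if l = k then base + SG + s + p k
            else base + (∑ l' ∈ Finset.Ioo j l, (s + p l')) + s + p l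
        rw [if_neg (ne_of_gt hl.1), if_neg (ne_of_lt hl.2)]
    · -- strict improvement
      rw [hIcc, Finset.sum_insert hjnotmem, Finset.sum_insert hknotmem,
        Finset.sum_insert hjnotmem, Finset.sum_insert hknotmem,
        if_pos rfl, if_neg (ne_of_gt hjk), if_pos rfl]
      have hCj1 : a1.2.2.2 + s + a1.2.2.1 ≤ σ.C j := le_C σ ha1 ha1j
      have hCj2 : a2.2.2.2 + s + a2.2.2.1 ≤ σ.C j := le_C σ ha2 ha2j
      have hbj : max (b1.2.2.2 + s + b1.2.2.1) base ≤ σ.C j + w :=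
        max_le (by rw [hwdef] at *; linarith) (by rw [hbasedef] at *; linarith [hwpos])
      have hbk : base + SG + s + p k ≤ σ.C k - s := by
        have h1 := le_C σ hb2 hb2j
        rw [hbasedef]
        linarith [hpk, hwu, hchainD]
      have hgsum : ∑ l ∈ Finset.Ioo j k,
          (if l = j then max (b1.2.2.2 + s + b1.2.2.1) base
            else if l = k then base + SG + s + p k
            else base + (∑ l' ∈ Finset.Ioo j l, (s + p l')) + s + p l)
          ≤ ∑ l ∈ Finset.Ioo j k, (σ.C l - w) := by
        apply Finset.sum_le_sum
        intro l hl
        have hlm := Finset.mem_Ioo.1 hl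
        rw [if_neg (ne_of_gt hlm.1), if_neg (ne_of_lt hlm.2)]
        obtain ⟨g, hg, hgm, hgj2, hgq2⟩ := hgap l hlm.1 hlm.2
        have hcg : a2.2.2.2 + s + a2.2.2.1 + ∑ l' ∈ Finset.Ioo j g.2.1, (s + p l')
            ≤ g.2.2.2 := chain g.2.1.val g hg hgm (by rw [hgj2]; exact hlm.1)
          (by rw [hgj2]; exact le_of_lt hlm.2) rfl
        have hgx : Finset.Ioo j g.2.1 = Finset.Ioo j l := by rw [hgj2]
        rw [hgx] at hcg
        have hCl : g.2.2.2 + s + g.2.2.1 ≤ σ.C l := le_C σ hg hgj2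
        rw [hgq2] at hCl
        rw [hbasedef]
        linarith
      have hsplit : ∑ l ∈ Finset.Ioo j k, (σ.C l - w)
          = (∑ l ∈ Finset.Ioo j k, σ.C l) - (Finset.Ioo j k).card * w := by
        rw [Finset.sum_sub_distrib, Finset.sum_const, nsmul_eq_mul]
      have hcard : (1 : ℝ) ≤ (Finset.Ioo j k).card := by
        have := Finset.card_pos.2 hIoone
        exact_mod_cast this
      have hcardmul : w ≤ (Finset.Ioo j k).card * w := by
        nlinarith [hcard, hwpos]
      linarith [hgsum, hsplit, hbj, hbk]

end StmtAux

/-- On two machines, let `σ` be an optimal schedule having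
the SPT property (jobs indexed in SPT order).  (1) If `j < k` are 2-jobs, all
jobs strictly between them are 1-jobs and there is at least one such job, then
each machine processes at least one job with index strictly between `j` and
`k`.  (2) If `j` is the 2-job of largest index and some job has index larger
than `j`, then each machine processes at least one job with index larger
than `j`. -/
theorem stmt3 {n : ℕ} {p : Fin n → ℝ} (hp : ∀ j, 0 < p j) (hmono : Monotone p)
    {s : ℝ} (hs : 0 < s) (σ : Schedule 2 n p s)
    (hopt : ∀ σ' : Schedule 2 n p s, σ.total ≤ σ'.total)
    (hSPT : σ.SPTProperty) :
    (∀ j k : Fin n, j < k → σ.TwoJob j → σ.TwoJob k →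
      (∀ l : Fin n, j < l → l < k → σ.OneJob l) →
      (∃ l : Fin n, j < l ∧ l < k) →
      ∀ i : Fin 2, ∃ x ∈ σ.parts, x.1 = i ∧ j < x.2.1 ∧ x.2.1 < k) ∧
    (∀ j : Fin n, σ.TwoJob j → (∀ l : Fin n, σ.TwoJob l → l ≤ j) →
      (∃ l : Fin n, j < l) →
      ∀ i : Fin 2, ∃ x ∈ σ.parts, x.1 = i ∧ j < x.2.1) := by
  constructor
  · intro j k hjk h2j h2k hone hex
    exact StmtAux.part1 hp hs σ hopt hSPT j k hjk h2j h2k hone hex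
  · intro j h2j hmax hex
    exact StmtAux.part2 hp hs σ hopt hSPT j h2j hmax hex
end

section
/- Assume p_1 ≤ … ≤ p_n. For every feasible schedule σ on m machines: Σ_{j=1}^n C_j(σ) ≥ Σ_{j=1}^n ( s + (1/m) Σ_{k=1}^j p_k ). -/
open Finset

/-!
Sort the jobs by completion time and let `T` be the completion time of the `j`-th of them.
The first `j` jobs are finished by `T`, and on every machine their processing parts occupy
pairwise disjoint intervals `[t + s, t + s + q) ⊆ [s, T)`; so their total processing time is at
most `m (T - s)`. Since `p` is monotone, that total is at least `p₁ + ⋯ + pⱼ`.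
-/

open MeasureTheory Set in
theorem sum_le_of_pairwiseDisjoint_Ico {ι : Type*} {F : Finset ι} {t l : ι → ℝ} {a b : ℝ}
    (hab : a ≤ b) (hl : ∀ x ∈ F, 0 ≤ l x) (hsub : ∀ x ∈ F, Ico (t x) (t x + l x) ⊆ Ico a b)
    (hdisj : (F : Set ι).PairwiseDisjoint fun x => Ico (t x) (t x + l x)) :
    ∑ x ∈ F, l x ≤ b - a := by
  have hvol : volume (⋃ x ∈ F, Ico (t x) (t x + l x)) ≤ volume (Ico a b) :=
    measure_mono (iUnion₂_subset hsub)
  simp_rw [measure_biUnion_finset hdisj (fun _ _ => measurableSet_Ico), Real.volume_Ico,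
    add_sub_cancel_left] at hvol
  rwa [← ENNReal.ofReal_sum_of_nonneg hl, ENNReal.ofReal_le_ofReal_iff (sub_nonneg.2 hab)] at hvol

theorem Monotone.sum_Iic_le_sum {α M : Type*} [LinearOrder α] [LocallyFiniteOrderBot α]
    [AddCommMonoid M] [PartialOrder M] [IsOrderedAddMonoid M] {f : α → M} (hf : Monotone f)
    {a : α} {S : Finset α} (hS : #(Iic a) = #S) :
    ∑ x ∈ Iic a, f x ≤ ∑ x ∈ S, f x := by
  classical
  rw [← sum_sdiff (inter_subset_left (s₁ := Iic a) (s₂ := S)),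
    ← sum_sdiff (inter_subset_right (s₁ := Iic a) (s₂ := S)), sdiff_inter_self_left,
    sdiff_inter_self_right]
  gcongr ?_ + _
  calc ∑ x ∈ Iic a \ S, f x ≤ #(Iic a \ S) • f a :=
        sum_le_card_nsmul _ _ _ fun x hx => hf (mem_Iic.1 (mem_sdiff.1 hx).1)
    _ = #(S \ Iic a) • f a := by rw [card_sdiff_comm hS]
    _ ≤ ∑ x ∈ S \ Iic a, f x :=
        card_nsmul_le_sum _ _ _ fun x hx => hf (not_le.1 (mt mem_Iic.2 (mem_sdiff.1 hx).2)).le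

namespace Schedule

variable {m n : ℕ} {p : Fin n → ℝ} {s : ℝ} (σ : Schedule m n p s)

theorem finish_le_C {x : Fin m × Fin n × ℝ × ℝ} (hx : x ∈ σ.parts) :
    x.2.2.2 + s + x.2.2.1 ≤ σ.C x.2.1 := by
  refine le_csSup ?_ ⟨x, hx, rfl, rfl⟩
  refine (σ.parts.image fun y => y.2.2.2 + s + y.2.2.1).bddAbove.mono ?_
  rintro r ⟨y, hy, -, rfl⟩
  exact mem_coe.2 (mem_image_of_mem _ hy)

theorem exists_part {j : Fin n} (hj : p j ≠ 0) : ∃ x ∈ σ.parts, x.2.1 = j := by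
  by_contra! h
  exact hj <| σ.sum_q j ▸ sum_eq_zero fun x hx =>
    absurd (mem_filter.1 hx).2 (h x (mem_filter.1 hx).1)

theorem setup_lt_C {j : Fin n} (hj : p j ≠ 0) : s < σ.C j := by
  obtain ⟨x, hx, rfl⟩ := σ.exists_part hj
  linarith [σ.finish_le_C hx, σ.q_pos x hx, σ.t_nonneg x hx]

theorem sum_q_le_of_finish_le (hs : 0 ≤ s) {i : Fin m} {F : Finset (Fin m × Fin n × ℝ × ℝ)}
    (hF : F ⊆ σ.parts) (hi : ∀ x ∈ F, x.1 = i) {T : ℝ} (hsT : s ≤ T)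
    (hT : ∀ x ∈ F, x.2.2.2 + s + x.2.2.1 ≤ T) :
    ∑ x ∈ F, x.2.2.1 ≤ T - s := by
  refine sum_le_of_pairwiseDisjoint_Ico (t := fun x => x.2.2.2 + s) hsT
    (fun x hx => (σ.q_pos x (hF hx)).le)
    (fun x hx => Set.Ico_subset_Ico (by linarith [σ.t_nonneg x (hF hx)]) (hT x hx)) ?_
  intro x hx y hy hxy
  rw [Function.onFun, Set.Ico_disjoint_Ico]
  rcases σ.disj x (hF hx) y (hF hy) hxy ((hi x hx).trans (hi y hy).symm) with h | h
  · exact (min_le_left _ _).trans (le_max_of_le_right (by linarith))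
  · exact (min_le_right _ _).trans (le_max_of_le_left (by linarith))

theorem sum_p_le_mul_of_C_le (hs : 0 ≤ s) {S : Finset (Fin n)} {T : ℝ} (hsT : s ≤ T)
    (hC : ∀ j ∈ S, σ.C j ≤ T) :
    ∑ j ∈ S, p j ≤ m * (T - s) := by
  classical
  set G := σ.parts.filter fun x => x.2.1 ∈ S
  have hG : ∑ j ∈ S, p j = ∑ x ∈ G, x.2.2.1 := by
    rw [← sum_fiberwise_of_maps_to (fun x hx => (mem_filter.1 hx).2)]
    refine sum_congr rfl fun j hj => ?_
    rw [← σ.sum_q j, filter_filter]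
    exact sum_congr (filter_congr fun x _ => ⟨fun h => ⟨by rwa [h], h⟩, And.right⟩) fun _ _ => rfl
  calc ∑ j ∈ S, p j = ∑ i : Fin m, ∑ x ∈ G with x.1 = i, x.2.2.1 := by
        rw [hG, sum_fiberwise]
    _ ≤ ∑ _i : Fin m, (T - s) := by
        refine sum_le_sum fun i _ => σ.sum_q_le_of_finish_le hs
          ((filter_subset _ _).trans (filter_subset _ _)) (fun x hx => (mem_filter.1 hx).2) hsT ?_
        intro x hx
        have hxG := (mem_filter.1 hx).1
        exact (σ.finish_le_C (mem_filter.1 hxG).1).trans (hC _ (mem_filter.1 hxG).2)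
    _ = m * (T - s) := by rw [sum_const, card_univ, Fintype.card_fin, nsmul_eq_mul]

end Schedule

theorem stmt6_general {m n : ℕ} {p : Fin n → ℝ} (hp : ∀ j, 0 < p j)
    (hmono : Monotone p) {s : ℝ} (hs : 0 < s) (σ : Schedule m n p s) :
    σ.total ≥
      ∑ j : Fin n,
        (s + (1 / (m : ℝ)) * ∑ k ∈ Finset.univ.filter (· ≤ j), p k) := by
  set π := Tuple.sort σ.C
  rw [ge_iff_le, Schedule.total, ← Equiv.sum_comp π σ.C]
  refine sum_le_sum fun j _ => ?_
  have hsC : s ≤ σ.C (π j) := (σ.setup_lt_C (hp _).ne').le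
  have hjobs : ∑ k ∈ (Iic j).map π.toEmbedding, p k ≤ m * (σ.C (π j) - s) := by
    refine σ.sum_p_le_mul_of_C_le hs.le hsC fun k hk => ?_
    obtain ⟨i, hi, rfl⟩ := mem_map.1 hk
    exact Tuple.monotone_sort σ.C (mem_Iic.1 hi)
  have hprefix := hmono.sum_Iic_le_sum (a := j) (card_map π.toEmbedding).symm
  rw [filter_ge_eq_Iic, one_div_mul_eq_div]
  -- `div_le_of_le_mul₀` also covers `m = 0`, where `x / 0 = 0`.
  linarith [div_le_of_le_mul₀ (Nat.cast_nonneg m) (sub_nonneg.2 hsC)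
    (hprefix.trans (hjobs.trans_eq (mul_comm _ _)))]

/-- With `p` nondecreasing, every feasible schedule `σ` on
`m` machines satisfies
`∑ⱼ C j σ ≥ ∑ⱼ (s + (1/m) ∑_{k ≤ j} p k)`. -/
theorem stmt6 {m n : ℕ} (hm : 0 < m) {p : Fin n → ℝ} (hp : ∀ j, 0 < p j)
    (hmono : Monotone p) {s : ℝ} (hs : 0 < s) (σ : Schedule m n p s) :
    σ.total ≥
      ∑ j : Fin n,
        (s + (1 / (m : ℝ)) * ∑ k ∈ Finset.univ.filter (· ≤ j), p k) :=
  stmt6_general hp hmono hs σ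
end

section
/- Assume p_1 ≤ … ≤ p_n. For every feasible schedule σ on m machines and every h ∈ {1,…,n}, the h-th smallest value among C_1(σ), …, C_n(σ) is at least μ_h := (1/m) Σ_{k=1}^h (s + p_k). -/
open Finset

open MeasureTheory in
lemma pack {ι : Type*} (F : Finset ι) (a b : ι → ℝ) (T : ℝ) (hT : 0 ≤ T)
    (hab : ∀ i ∈ F, a i ≤ b i) (ha : ∀ i ∈ F, 0 ≤ a i) (hb : ∀ i ∈ F, b i ≤ T)
    (hd : ∀ i ∈ F, ∀ j ∈ F, i ≠ j → b i ≤ a j ∨ b j ≤ a i) :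
    ∑ i ∈ F, (b i - a i) ≤ T := by
  classical
  have hdisj : (F : Set ι).PairwiseDisjoint (fun i => Set.Ico (a i) (b i)) := by
    intro i hi j hj hij
    rcases hd i hi j hj hij with h | h
    · exact Set.Ico_disjoint_Ico.2 (by simp [min_le_iff, le_max_iff]; tauto)
    · exact Set.Ico_disjoint_Ico.2 (by simp [min_le_iff, le_max_iff]; tauto)
  have hmeas : volume (⋃ i ∈ F, Set.Ico (a i) (b i)) = ∑ i ∈ F, volume (Set.Ico (a i) (b i)) :=
    measure_biUnion_finset hdisj (fun i _ => measurableSet_Ico)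
  have hsub : (⋃ i ∈ F, Set.Ico (a i) (b i)) ⊆ Set.Ico 0 T := by
    intro x hx
    simp only [Set.mem_iUnion] at hx
    obtain ⟨i, hi, hx⟩ := hx
    exact ⟨le_trans (ha i hi) hx.1, lt_of_lt_of_le hx.2 (hb i hi)⟩
  have h1 : ∑ i ∈ F, volume (Set.Ico (a i) (b i)) ≤ volume (Set.Ico 0 T) :=
    hmeas ▸ measure_mono hsub
  simp only [Real.volume_Ico, sub_zero] at h1
  have h2 : ENNReal.ofReal (∑ i ∈ F, (b i - a i)) ≤ ENNReal.ofReal T := by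
    rw [ENNReal.ofReal_sum_of_nonneg (fun i hi => sub_nonneg.2 (hab i hi))]
    exact h1
  exact (ENNReal.ofReal_le_ofReal_iff hT).1 h2

lemma sum_iic_le {n : ℕ} {p : Fin n → ℝ} (hmono : Monotone p) (h : Fin n)
    (S : Finset (Fin n)) (hcard : S.card = (h : ℕ) + 1) :
    ∑ k ∈ Finset.Iic h, p k ≤ ∑ j ∈ S, p j := by
  have hh1 : (h : ℕ) + 1 ≤ n := h.2
  let e := S.orderIsoOfFin hcard
  have he : StrictMono fun i => ((e i : Fin n) : ℕ) :=
    fun i j hij => by exact_mod_cast (e.lt_iff_lt).2 hij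
  have key : ∀ i : Fin ((h : ℕ) + 1), (i : ℕ) ≤ ((e i : Fin n) : ℕ) := by
    intro i
    induction' hi : (i : ℕ) with k ih generalizing i
    · exact Nat.zero_le _
    · have hk : k < (h : ℕ) + 1 := by omega
      have := ih ⟨k, hk⟩ rfl
      have h2 : ((e ⟨k, hk⟩ : Fin n) : ℕ) < ((e i : Fin n) : ℕ) := by
        apply he; simp [Fin.lt_def, hi]
      omega
  have h1 : ∑ k ∈ Finset.Iic h, p k = ∑ i : Fin ((h : ℕ) + 1), p (Fin.castLE hh1 i) := by
    rw [show Finset.Iic h = Finset.image (Fin.castLE hh1) Finset.univ by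
      ext k
      simp only [Finset.mem_Iic, Finset.mem_image, Finset.mem_univ, true_and]
      constructor
      · intro hk
        exact ⟨⟨(k : ℕ), Nat.lt_succ_of_le hk⟩, rfl⟩
      · rintro ⟨i, rfl⟩
        exact Fin.mk_le_mk.2 (Nat.lt_succ_iff.1 i.2)]
    rw [Finset.sum_image (fun a _ b _ hab => Fin.castLE_injective hh1 hab)]
  have h2 : ∑ j ∈ S, p j = ∑ i : Fin ((h : ℕ) + 1), p (e i : Fin n) := by
    have hS : S = Finset.image (fun i => ((e i : Fin n))) Finset.univ := by
      ext j
      simp only [Finset.mem_image, Finset.mem_univ, true_and]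
      constructor
      · intro hj
        exact ⟨e.symm ⟨j, hj⟩, by simp⟩
      · rintro ⟨i, rfl⟩
        exact (e i).2
    conv_lhs => rw [hS]
    rw [Finset.sum_image (fun a _ b _ hab => e.injective (Subtype.ext hab))]
  rw [h1, h2]
  exact Finset.sum_le_sum fun i _ => hmono (by exact_mod_cast key i)


/-- With `p` nondecreasing, for every feasible schedule `σ`
on `m` machines and every `h`, the `h`-th smallest completion time (obtained
by sorting the completion times nondecreasingly via `Tuple.sort`) is at least
`μ_h = (1/m) ∑_{k ≤ h} (s + p k)`. -/

theorem stmt7 {m n : ℕ} (hm : 0 < m) {p : Fin n → ℝ} (hp : ∀ j, 0 < p j)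
    (hmono : Monotone p) {s : ℝ} (hs : 0 < s) (σ : Schedule m n p s)
    (h : Fin n) :
    (1 / (m : ℝ)) * ∑ k ∈ Finset.univ.filter (· ≤ h), (s + p k) ≤
      σ.C (Tuple.sort σ.C h) := by
  classical
  set T := σ.C (Tuple.sort σ.C h) with hT
  -- the set defining C j is the coercion of a finset image
  have hset : ∀ j : Fin n,
      {r : ℝ | ∃ x ∈ σ.parts, x.2.1 = j ∧ r = x.2.2.2 + s + x.2.2.1} =
        ↑((σ.parts.filter (fun x => x.2.1 = j)).image
            (fun x => x.2.2.2 + s + x.2.2.1)) := by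
    intro j
    ext r
    simp only [Set.mem_setOf_eq, Finset.coe_image, Set.mem_image, Finset.mem_coe,
      Finset.mem_filter]
    constructor
    · rintro ⟨x, hx, hj, rfl⟩; exact ⟨x, ⟨hx, hj⟩, rfl⟩
    · rintro ⟨x, ⟨hx, hj⟩, rfl⟩; exact ⟨x, hx, hj, rfl⟩
  -- each job has at least one part
  have hne : ∀ j : Fin n, (σ.parts.filter (fun x => x.2.1 = j)).Nonempty := by
    intro j
    rw [Finset.nonempty_iff_ne_empty]
    intro hc
    have := σ.sum_q j
    rw [hc, Finset.sum_empty] at this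
    exact absurd this.symm (ne_of_gt (hp j))
  -- every part finishes no later than the completion time of its job
  have hfin : ∀ x ∈ σ.parts, x.2.2.2 + s + x.2.2.1 ≤ σ.C x.2.1 := by
    intro x hx
    apply le_csSup
    · rw [hset x.2.1]
      exact Finset.bddAbove _
    · exact ⟨x, hx, rfl, rfl⟩
  -- jobs indexed by k ≤ h have completion time ≤ T
  have hCle : ∀ k : Fin n, k ≤ h → σ.C (Tuple.sort σ.C k) ≤ T :=
    fun k hk => Tuple.monotone_sort σ.C hk
  -- T is nonnegative
  have hT0 : 0 ≤ T := by
    obtain ⟨x, hx⟩ := hne (Tuple.sort σ.C h)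
    rw [Finset.mem_filter] at hx
    have h1 := hfin x hx.1
    rw [hx.2] at h1
    have := σ.q_pos x hx.1
    have := σ.t_nonneg x hx.1
    linarith
  -- the set of the h+1 "earliest" jobs
  set J : Finset (Fin n) := (Finset.Iic h).image (Tuple.sort σ.C) with hJ
  have hJcard : J.card = (h : ℕ) + 1 := by
    rw [hJ, Finset.card_image_of_injective _ (Tuple.sort σ.C).injective, Fin.card_Iic]
  have hCJ : ∀ j ∈ J, σ.C j ≤ T := by
    intro j hj
    rw [hJ, Finset.mem_image] at hj
    obtain ⟨k, hk, rfl⟩ := hj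
    exact hCle k (Finset.mem_Iic.1 hk)
  -- parts belonging to the earliest jobs
  set P : Finset (Fin m × Fin n × ℝ × ℝ) := σ.parts.filter (fun x => x.2.1 ∈ J) with hP
  -- fiberwise over machines: total occupied length ≤ m * T
  have hmachine : ∑ x ∈ P, (s + x.2.2.1) ≤ (m : ℝ) * T := by
    have hsplit : ∑ i : Fin m, ∑ x ∈ P.filter (fun x => x.1 = i), (s + x.2.2.1) =
        ∑ x ∈ P, (s + x.2.2.1) :=
      Finset.sum_fiberwise_of_maps_to (fun x _ => Finset.mem_univ _) _
    rw [← hsplit]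
    calc ∑ i : Fin m, ∑ x ∈ P.filter (fun x => x.1 = i), (s + x.2.2.1)
        ≤ ∑ _i : Fin m, T := by
          apply Finset.sum_le_sum
          intro i _
          have heq : ∑ x ∈ P.filter (fun x => x.1 = i), (s + x.2.2.1) =
              ∑ x ∈ P.filter (fun x => x.1 = i),
                ((x.2.2.2 + s + x.2.2.1) - x.2.2.2) := by
            apply Finset.sum_congr rfl; intro x _; ring
          rw [heq]
          apply pack _ _ _ T hT0
          · intro x hx
            rw [Finset.mem_filter, hP, Finset.mem_filter] at hx
            have := σ.q_pos x hx.1.1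
            linarith
          · intro x hx
            rw [Finset.mem_filter, hP, Finset.mem_filter] at hx
            exact σ.t_nonneg x hx.1.1
          · intro x hx
            rw [Finset.mem_filter, hP, Finset.mem_filter] at hx
            exact le_trans (hfin x hx.1.1) (hCJ _ hx.1.2)
          · intro x hx y hy hxy
            rw [Finset.mem_filter, hP, Finset.mem_filter] at hx hy
            exact σ.disj x hx.1.1 y hy.1.1 hxy (hx.2.trans hy.2.symm)
      _ = (m : ℝ) * T := by
          rw [Finset.sum_const, Finset.card_univ, Fintype.card_fin, nsmul_eq_mul]
  -- total occupied length ≥ ∑_{j ∈ J} (s + p j)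
  have hjobs : ∑ j ∈ J, (s + p j) ≤ ∑ x ∈ P, (s + x.2.2.1) := by
    have hsplit : ∑ j ∈ J, ∑ x ∈ P.filter (fun x => x.2.1 = j), (s + x.2.2.1) =
        ∑ x ∈ P, (s + x.2.2.1) :=
      Finset.sum_fiberwise_of_maps_to (fun x hx => (Finset.mem_filter.1 hx).2) _
    rw [← hsplit]
    apply Finset.sum_le_sum
    intro j hj
    have hPj : P.filter (fun x => x.2.1 = j) = σ.parts.filter (fun x => x.2.1 = j) := by
      rw [hP, Finset.filter_filter]
      apply Finset.filter_congr
      intro x _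
      simp only [and_iff_right_iff_imp]
      intro hx; rw [hx]; exact hj
    rw [hPj, Finset.sum_add_distrib, Finset.sum_const, σ.sum_q j, nsmul_eq_mul]
    have hc : 1 ≤ ((σ.parts.filter (fun x => x.2.1 = j)).card : ℝ) := by
      have := Finset.card_pos.2 (hne j)
      exact_mod_cast this
    nlinarith
  -- rearrangement: ∑_{k ≤ h} (s + p k) ≤ ∑_{j ∈ J} (s + p j)
  have hrearr : ∑ k ∈ Finset.univ.filter (· ≤ h), (s + p k) ≤ ∑ j ∈ J, (s + p j) := by
    have : Finset.univ.filter (· ≤ h) = Finset.Iic h := by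
      ext k; simp
    rw [this]
    exact sum_iic_le (fun a b hab => by have := hmono hab; linarith) h J hJcard
  have hmpos : (0 : ℝ) < m := by exact_mod_cast hm
  rw [one_div, inv_mul_le_iff₀ hmpos]
  calc ∑ k ∈ Finset.univ.filter (· ≤ h), (s + p k)
      ≤ ∑ j ∈ J, (s + p j) := hrearr
    _ ≤ ∑ x ∈ P, (s + x.2.2.1) := hjobs
    _ ≤ (m : ℝ) * T := hmachine
end

section
/- Let s > 0 and α > 0 be real numbers, let m ≥ 1 be an integer, and let p_1, …, p_n > 0 be reals. For k = 1, …, n set ℓ_k = min{⌈α p_k / s⌉, m}. Then for every j ∈ {1,…,n}: (1/m) Σ_{k=1}^{j−1} (p_k + ℓ_k s) + p_j/ℓ_j + s ≤ ((1+α)/m) Σ_{k=1}^j p_k + ((j−1)/m + 1 + 1/α) s. -/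
/-- Let `s, α > 0`, `m ≥ 1`, and `p k > 0` for the jobs
`k`, and set `ℓ k = min ⌈α p k / s⌉ m`.  Then, for every job `j` (0-indexed,
so that `j` has `(j : ℕ)` predecessors):
`(1/m) ∑_{k < j} (p k + ℓ k · s) + p j / ℓ j + s
  ≤ ((1+α)/m) ∑_{k ≤ j} p k + ((j−1)/m + 1 + 1/α) s`. -/
theorem stmt11 (s α : ℝ) (hs : 0 < s) (hα : 0 < α) (m : ℕ) (hm : 1 ≤ m)
    (n : ℕ) (p : Fin n → ℝ) (hp : ∀ k, 0 < p k) (j : Fin n) :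
    (1 / (m : ℝ)) *
        (∑ k ∈ Finset.univ.filter (· < j),
          (p k + ((min ⌈α * p k / s⌉ (m : ℤ) : ℤ) : ℝ) * s)) +
      p j / ((min ⌈α * p j / s⌉ (m : ℤ) : ℤ) : ℝ) + s ≤
    ((1 + α) / (m : ℝ)) * (∑ k ∈ Finset.univ.filter (· ≤ j), p k) +
      (((j : ℕ) : ℝ) / (m : ℝ) + 1 + 1 / α) * s := by
  have hm0 : (0 : ℝ) < (m : ℝ) := by exact_mod_cast Nat.lt_of_lt_of_le Nat.zero_lt_one hm
  set L : Fin n → ℤ := fun k => min ⌈α * p k / s⌉ (m : ℤ) with hL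
  -- each ℓ_k ≥ 1
  have hL1 : ∀ k, (1 : ℤ) ≤ L k := by
    intro k
    refine le_min ?_ (by exact_mod_cast hm)
    exact Int.ceil_pos.mpr (div_pos (mul_pos hα (hp _)) hs)
  -- ℓ_k * s ≤ α p_k + s
  have hLs : ∀ k, (L k : ℝ) * s ≤ α * p k + s := by
    intro k
    have h1 : (L k : ℝ) ≤ α * p k / s + 1 := by
      have := Int.ceil_le_floor_add_one (α * p k / s)
      have h2 : (L k : ℝ) ≤ (⌈α * p k / s⌉ : ℝ) := by exact_mod_cast min_le_left _ _
      have h3 : (⌈α * p k / s⌉ : ℝ) < α * p k / s + 1 := Int.ceil_lt_add_one _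
      linarith
    have := mul_le_mul_of_nonneg_right h1 hs.le
    calc (L k : ℝ) * s ≤ (α * p k / s + 1) * s := this
      _ = α * p k + s := by field_simp
  -- key bound on p j / ℓ j
  have hkey : p j / (L j : ℝ) ≤ (1 + α) * p j / m + s / α := by
    rcases le_or_gt ⌈α * p j / s⌉ (m : ℤ) with h | h
    · have hLj : L j = ⌈α * p j / s⌉ := min_eq_left h
      have hpos : (0 : ℝ) < (L j : ℝ) := by exact_mod_cast hL1 j
      have hge : α * p j / s ≤ (L j : ℝ) := by
        rw [hLj]; exact_mod_cast Int.le_ceil _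
      have h1 : p j / (L j : ℝ) ≤ s / α := by
        rw [div_le_div_iff₀ hpos hα]
        have := mul_le_mul_of_nonneg_right hge hs.le
        have h2 : α * p j / s * s = α * p j := by field_simp
        nlinarith
      have hpj := hp j
      have h2 : (0 : ℝ) ≤ (1 + α) * p j / m := by positivity
      linarith
    · have hLj : L j = (m : ℤ) := min_eq_right h.le
      have h1 : p j / (L j : ℝ) = p j / m := by rw [hLj]; norm_num
      have h2 : p j / (m : ℝ) ≤ (1 + α) * p j / m := by
        have : p j ≤ (1 + α) * p j := by nlinarith [hp j]
        exact (div_le_div_iff_of_pos_right hm0).mpr this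
      have h3 : (0 : ℝ) ≤ s / α := by positivity
      rw [h1]; linarith
  -- split the ≤ j sum
  have hnotmem : j ∉ Finset.univ.filter (· < j) := by simp
  have hsplit : Finset.univ.filter (· ≤ j) = insert j (Finset.univ.filter (· < j)) := by
    ext k
    simp [le_iff_lt_or_eq, or_comm]
  have hsum : ∑ k ∈ Finset.univ.filter (· ≤ j), p k
      = p j + ∑ k ∈ Finset.univ.filter (· < j), p k := by
    rw [hsplit, Finset.sum_insert hnotmem]
  -- card of predecessors
  have hIio : Finset.univ.filter (· < j) = Finset.Iio j := by
    ext k; simp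
  have hcard : (Finset.univ.filter (· < j)).card = (j : ℕ) := by
    rw [hIio, Fin.card_Iio]
  set A := ∑ k ∈ Finset.univ.filter (· < j), p k with hA
  have hA0 : 0 ≤ A := Finset.sum_nonneg fun k _ => (hp k).le
  -- bound the first sum
  have hsum1 : ∑ k ∈ Finset.univ.filter (· < j), (p k + (L k : ℝ) * s)
      ≤ (1 + α) * A + (j : ℕ) * s := by
    have h1 : ∑ k ∈ Finset.univ.filter (· < j), (p k + (L k : ℝ) * s)
        ≤ ∑ k ∈ Finset.univ.filter (· < j), ((1 + α) * p k + s) := by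
      apply Finset.sum_le_sum
      intro k _
      have := hLs k
      linarith
    have h2 : ∑ k ∈ Finset.univ.filter (· < j), ((1 + α) * p k + s)
        = (1 + α) * A + (j : ℕ) * s := by
      rw [Finset.sum_add_distrib, ← Finset.mul_sum, Finset.sum_const, hcard]
      push_cast
      ring
    linarith
  have hmul : (1 / (m : ℝ)) * (∑ k ∈ Finset.univ.filter (· < j), (p k + (L k : ℝ) * s))
      ≤ (1 / (m : ℝ)) * ((1 + α) * A + (j : ℕ) * s) :=
    mul_le_mul_of_nonneg_left hsum1 (by positivity)
  rw [hsum]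
  have hfinal : (1 / (m : ℝ)) * ((1 + α) * A + (j : ℕ) * s) + ((1 + α) * p j / m + s / α) + s
      = (1 + α) / (m : ℝ) * (p j + A) + (((j : ℕ) : ℝ) / m + 1 + 1 / α) * s := by
    field_simp
    ring
  linarith [hmul, hkey]
end

section
/- Let s > 0 and α > 0 be real numbers satisfying 3/2 + α ≥ 1 + 1/α, let m ≥ 1 and n ≥ 1 be integers, and let p_1, …, p_n ≥ 0 be reals. Then Σ_{j=1}^n [ ((1+α)/m) Σ_{k=1}^j p_k + ((j−1)/m + 1 + 1/α) s ] ≤ (1+α) Σ_{j=1}^n ( s + (1/m) Σ_{k=1}^j p_k ) + s · Σ_{j=1}^n ⌈j/m⌉. -/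
lemma sum_mod_eq (m : ℕ) (hm : 1 ≤ m) (n : ℕ) :
    2 * (∑ j ∈ Finset.range n, j % m) + (n % m) * (m - n % m) = n * (m - 1) := by
  induction n with
  | zero => simp
  | succ n ih =>
    rw [Finset.sum_range_succ]
    have hr : n % m < m := Nat.mod_lt _ (by omega)
    have hstep : (n + 1) % m = (n % m + 1) % m := by
      conv_lhs => rw [← Nat.mod_add_mod]
    set r := n % m with hrdef
    rcases eq_or_ne r (m - 1) with h | h
    · have h1 : (n + 1) % m = 0 := by
        rw [hstep, h, show m - 1 + 1 = m by omega, Nat.mod_self]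
      rw [h1]
      zify [hm, hr.le] at ih ⊢
      have hz : (r : ℤ) = (m : ℤ) - 1 := by omega
      linear_combination ih + ((r : ℤ) + 1) * hz
    · have h1 : (n + 1) % m = r + 1 := by
        rw [hstep, Nat.mod_eq_of_lt (by omega)]
      rw [h1]
      have hr1 : r + 1 ≤ m := by omega
      zify [hm, hr.le, hr1] at ih ⊢
      linear_combination ih

lemma ceil_succ_div (m : ℕ) (hm : 1 ≤ m) (j : ℕ) :
    ⌈(((j : ℚ)) + 1) / (m : ℚ)⌉ = (j / m : ℕ) + 1 := by
  have hm0 : (0 : ℚ) < (m : ℚ) := by exact_mod_cast hm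
  obtain ⟨q, r, hrm, rfl⟩ : ∃ q r, r < m ∧ j = m * q + r :=
    ⟨j / m, j % m, Nat.mod_lt _ (by omega), (Nat.div_add_mod j m).symm⟩
  have hdiv : (m * q + r) / m = q := by
    rw [Nat.mul_add_div (by omega), Nat.div_eq_of_lt hrm]; ring_nf
  rw [hdiv, Int.ceil_eq_iff]
  have hrm' : (r : ℚ) < m := by exact_mod_cast hrm
  have hrm1 : (r : ℚ) + 1 ≤ m := by exact_mod_cast hrm
  constructor
  · rw [lt_div_iff₀ hm0]
    push_cast
    ring_nf
    nlinarith
  · rw [div_le_iff₀ hm0]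
    push_cast
    ring_nf
    nlinarith

/-- Let `s > 0` and `α > 0` with `3/2 + α ≥ 1 + 1/α`, let
`m, n ≥ 1`, and let `p j ≥ 0`.  Then (jobs 0-indexed, so job `j` is the
`(j+1)`-st job):
`∑ⱼ [((1+α)/m) ∑_{k ≤ j} p k + ((j−1)/m + 1 + 1/α) s]
  ≤ (1+α) ∑ⱼ (s + (1/m) ∑_{k ≤ j} p k) + s ∑ⱼ ⌈j/m⌉`. -/
theorem stmt12 (s α : ℝ) (hs : 0 < s) (hα : 0 < α)
    (hcond : 3 / 2 + α ≥ 1 + 1 / α)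
    (m : ℕ) (hm : 1 ≤ m) (n : ℕ) (hn : 1 ≤ n)
    (p : Fin n → ℝ) (hp : ∀ k, 0 ≤ p k) :
    ∑ j : Fin n,
        (((1 + α) / (m : ℝ)) * (∑ k ∈ Finset.univ.filter (· ≤ j), p k) +
          (((j : ℕ) : ℝ) / (m : ℝ) + 1 + 1 / α) * s) ≤
      (1 + α) *
          (∑ j : Fin n,
            (s + (1 / (m : ℝ)) * ∑ k ∈ Finset.univ.filter (· ≤ j), p k)) +
        s * ∑ j : Fin n, ((⌈(((j : ℕ) : ℚ) + 1) / (m : ℚ)⌉ : ℤ) : ℝ) := by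
  have hm0 : (0 : ℝ) < (m : ℝ) := by exact_mod_cast hm
  have hn0 : (0 : ℝ) ≤ (n : ℝ) := by positivity
  -- rewrite the ceiling terms
  have hceil : ∀ j : Fin n, ((⌈(((j : ℕ) : ℚ) + 1) / (m : ℚ)⌉ : ℤ) : ℝ)
      = (((j : ℕ) : ℝ) - (((j : ℕ) % m : ℕ) : ℝ)) / m + 1 := by
    intro j
    rw [ceil_succ_div m hm]
    have hd : (m : ℝ) * (((j : ℕ) / m : ℕ) : ℝ) + (((j : ℕ) % m : ℕ) : ℝ)
        = ((j : ℕ) : ℝ) := by exact_mod_cast Nat.div_add_mod (j : ℕ) m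
    rw [Int.cast_add, Int.cast_one, Int.cast_natCast]
    field_simp
    linarith
  simp only [hceil]
  -- main scalar inequality
  have key : ∑ j ∈ Finset.range n, (((j : ℕ) : ℝ) / m + 1 + 1 / α) * s
      ≤ (1 + α) * ((n : ℝ) * s) +
        s * ∑ j ∈ Finset.range n, (((j : ℝ) - ((j % m : ℕ) : ℝ)) / m + 1) := by
    have hmod : 2 * (∑ j ∈ Finset.range n, ((j % m : ℕ) : ℝ)) ≤ (n : ℝ) * m := by
      have h2 : 2 * (∑ j ∈ Finset.range n, j % m) ≤ n * m := by
        have := sum_mod_eq m hm n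
        have : 2 * (∑ j ∈ Finset.range n, j % m) ≤ n * (m - 1) := by omega
        calc 2 * (∑ j ∈ Finset.range n, j % m) ≤ n * (m - 1) := this
          _ ≤ n * m := Nat.mul_le_mul_left n (Nat.sub_le m 1)
      calc 2 * (∑ j ∈ Finset.range n, ((j % m : ℕ) : ℝ))
          = ((2 * ∑ j ∈ Finset.range n, j % m : ℕ) : ℝ) := by push_cast; ring
        _ ≤ ((n * m : ℕ) : ℝ) := by exact_mod_cast h2
        _ = (n : ℝ) * m := by push_cast; ring
    set A : ℝ := ∑ j ∈ Finset.range n, ((j : ℕ) : ℝ) with hA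
    set M : ℝ := ∑ j ∈ Finset.range n, ((j % m : ℕ) : ℝ) with hM
    have e1 : ∑ j ∈ Finset.range n, (((j : ℕ) : ℝ) / m + 1 + 1 / α) * s
        = (A / m + n + n / α) * s := by
      rw [Finset.sum_congr rfl (fun j _ => by ring :
        ∀ j ∈ Finset.range n, (((j : ℕ) : ℝ) / m + 1 + 1 / α) * s
          = ((j : ℕ) : ℝ) * (s / m) + (1 + 1/α) * s)]
      rw [Finset.sum_add_distrib, ← Finset.sum_mul, Finset.sum_const,
        Finset.card_range, nsmul_eq_mul]
      field_simp
      ring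
    have e2 : ∑ j ∈ Finset.range n, (((j : ℝ) - ((j % m : ℕ) : ℝ)) / m + 1)
        = (A - M) / m + n := by
      rw [Finset.sum_add_distrib, Finset.sum_const, Finset.card_range,
        nsmul_eq_mul, ← Finset.sum_div, Finset.sum_sub_distrib]
      push_cast
      ring
    rw [e1, e2]
    have hαs : (1 : ℝ) / α ≤ 1 / 2 + α := by linarith
    have hdivA : M / m ≤ (n : ℝ) / 2 := by
      rw [div_le_div_iff₀ hm0 (by norm_num)]
      linarith
    have hnα : (n : ℝ) / α ≤ (n : ℝ) / 2 + n * α := by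
      calc (n:ℝ) / α = n * (1/α) := by ring
        _ ≤ n * (1/2 + α) := mul_le_mul_of_nonneg_left hαs hn0
        _ = (n : ℝ)/2 + n * α := by ring
    have expand : ((A - M) / m : ℝ) = A / m - M / m := by ring
    nlinarith [mul_le_mul_of_nonneg_right hdivA hs.le,
      mul_le_mul_of_nonneg_right hnα hs.le]
  -- assemble
  rw [Finset.sum_add_distrib]
  have eL : ∑ j : Fin n, ((1 + α) / (m : ℝ)) * (∑ k ∈ Finset.univ.filter (· ≤ j), p k)
      = (1 + α) * ∑ j : Fin n, (1 / (m : ℝ)) * ∑ k ∈ Finset.univ.filter (· ≤ j), p k := by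
    rw [Finset.mul_sum]
    exact Finset.sum_congr rfl fun j _ => by ring
  rw [eL]
  rw [show (∑ j : Fin n, (s + (1 / (m : ℝ)) * ∑ k ∈ Finset.univ.filter (· ≤ j), p k))
      = (n : ℝ) * s + ∑ j : Fin n, (1 / (m : ℝ)) * ∑ k ∈ Finset.univ.filter (· ≤ j), p k
    by rw [Finset.sum_add_distrib, Finset.sum_const, Finset.card_univ,
        Fintype.card_fin, nsmul_eq_mul]]
  rw [mul_add]
  have hfin1 : ∑ j : Fin n, (((j : ℕ) : ℝ) / m + 1 + 1 / α) * s
      = ∑ j ∈ Finset.range n, (((j : ℕ) : ℝ) / m + 1 + 1 / α) * s :=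
    Fin.sum_univ_eq_sum_range (fun j => (((j : ℕ) : ℝ) / m + 1 + 1 / α) * s) n
  have hfin2 : ∑ j : Fin n, ((((j : ℕ) : ℝ) - (((j : ℕ) % m : ℕ) : ℝ)) / m + 1)
      = ∑ j ∈ Finset.range n, (((j : ℝ) - ((j % m : ℕ) : ℝ)) / m + 1) :=
    Fin.sum_univ_eq_sum_range (fun j => (((j : ℕ) : ℝ) - ((j % m : ℕ) : ℝ)) / m + 1) n
  rw [hfin1, hfin2]
  linarith [key]
end

section
/- Assume p_1 ≤ … ≤ p_n (all p_j > 0) and let α > 0 be a real number. There exists a feasible schedule σ on m machines such that for every j ∈ {1,…,n}: C_j(σ) ≤ ((1+α)/m) Σ_{k=1}^j p_k + ((j−1)/m + 1 + 1/α) s. -/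
/-!
Cut job `k` into `⌈α p_k / s⌉` equal pieces: each piece is then at most `s / α` long, while the
setups of job `k` cost at most `α p_k + s` in total. List-schedule the pieces job by job, each on a
currently least loaded machine. As in Graham's analysis, a piece starts no later than the average
load created by the pieces before it, which for a piece of job `j` is at most
`((1 + α) ∑_{k ≤ j} p_k + j s) / m`; its own setup and length add at most `s + s / α`.
-/

open Finset

namespace Schedule

variable {m n : ℕ} {p : Fin n → ℝ} {s : ℝ}

/-- `0 ≤ B` is needed because a job without parts has completion time `sSup ∅ = 0`. -/
lemma C_le {σ : Schedule m n p s} {j : Fin n} {B : ℝ} (hB : 0 ≤ B)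
    (h : ∀ x ∈ σ.parts, x.2.1 = j → x.2.2.2 + s + x.2.2.1 ≤ B) : σ.C j ≤ B :=
  Real.sSup_le (by rintro r ⟨x, hx, hj, rfl⟩; exact h x hx hj) hB

end Schedule

namespace ListScheduling

variable {m n : ℕ}

/-- `load i` is the time at which machine `i` becomes free. -/
structure State (m n : ℕ) where
  load : Fin m → ℝ
  parts : Finset (Fin m × Fin n × ℝ × ℝ)

variable [Nonempty (Fin m)]

noncomputable def leastLoaded (load : Fin m → ℝ) : Fin m :=
  (Finite.exists_min load).choose

lemma load_leastLoaded_le (load : Fin m → ℝ) (i : Fin m) : load (leastLoaded load) ≤ load i :=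
  (Finite.exists_min load).choose_spec i

lemma load_leastLoaded_le_average (load : Fin m → ℝ) :
    load (leastLoaded load) ≤ (∑ i, load i) / m := by
  have hm : (0 : ℝ) < m := by exact_mod_cast Fin.pos_iff_nonempty.mpr ‹_›
  rw [le_div_iff₀ hm, mul_comm, ← nsmul_eq_mul]
  simpa using card_nsmul_le_sum univ load _ fun i _ => load_leastLoaded_le load i

variable (s : ℝ) (q : Fin n → ℝ)

noncomputable def State.place (σ : State m n) (k : Fin n) : State m n where
  load := σ.load + Pi.single (leastLoaded σ.load) (s + q k)
  parts := insert (leastLoaded σ.load, k, q k, σ.load (leastLoaded σ.load)) σ.parts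

noncomputable def greedy (L : List (Fin n)) : State m n :=
  L.foldl (State.place s q) ⟨0, ∅⟩

@[simp] lemma greedy_nil : greedy s q [] = (⟨0, ∅⟩ : State m n) := rfl

@[simp] lemma greedy_append_singleton (L : List (Fin n)) (k : Fin n) :
    greedy (m := m) s q (L ++ [k]) = (greedy s q L).place s q k :=
  List.foldl_concat ..

variable {s q}

lemma sum_load_greedy (L : List (Fin n)) :
    ∑ i, (greedy (m := m) s q L).load i = (L.map (s + q ·)).sum := by
  induction L using List.reverseRecOn with
  | nil => simp
  | append_singleton L k ih =>
    simp [State.place, sum_add_distrib, ih, sum_pi_single']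

lemma length_eq_of_mem_greedy {L : List (Fin n)} {x : Fin m × Fin n × ℝ × ℝ}
    (hx : x ∈ (greedy s q L).parts) : x.2.2.1 = q x.2.1 := by
  induction L using List.reverseRecOn with
  | nil => simp at hx
  | append_singleton L k ih =>
    simp only [greedy_append_singleton, State.place, mem_insert] at hx
    rcases hx with rfl | hx
    exacts [rfl, ih hx]

lemma exists_split_start_le_of_mem_greedy {L : List (Fin n)} {x : Fin m × Fin n × ℝ × ℝ}
    (hx : x ∈ (greedy s q L).parts) :
    ∃ L₁ L₂, L = L₁ ++ x.2.1 :: L₂ ∧ x.2.2.2 ≤ (L₁.map (s + q ·)).sum / m := by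
  induction L using List.reverseRecOn with
  | nil => simp at hx
  | append_singleton L k ih =>
    simp only [greedy_append_singleton, State.place, mem_insert] at hx
    rcases hx with rfl | hx
    · refine ⟨L, [], rfl, ?_⟩
      rw [← sum_load_greedy (m := m)]
      exact load_leastLoaded_le_average _
    · obtain ⟨L₁, L₂, rfl, h⟩ := ih hx
      exact ⟨L₁, L₂ ++ [k], by simp, h⟩

section

variable (hsq : ∀ k, 0 < s + q k)
include hsq

lemma load_le_load_place (σ : State m n) (k : Fin n) (i : Fin m) :
    σ.load i ≤ (σ.place s q k).load i := by
  simp only [State.place, Pi.add_apply, le_add_iff_nonneg_right, Pi.single_apply]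
  split_ifs <;> linarith [hsq k]

lemma load_greedy_nonneg (L : List (Fin n)) (i : Fin m) : 0 ≤ (greedy s q L).load i := by
  induction L using List.reverseRecOn with
  | nil => simp
  | append_singleton L k ih =>
    simpa using ih.trans (load_le_load_place hsq _ k i)

lemma finish_le_load_of_mem_greedy {L : List (Fin n)} {x : Fin m × Fin n × ℝ × ℝ}
    (hx : x ∈ (greedy s q L).parts) : x.2.2.2 + s + x.2.2.1 ≤ (greedy s q L).load x.1 := by
  induction L using List.reverseRecOn generalizing x with
  | nil => simp at hx
  | append_singleton L k ih =>
    simp only [greedy_append_singleton, State.place, mem_insert] at hx ⊢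
    rcases hx with rfl | hx
    · simp [add_assoc]
    · exact (ih hx).trans (load_le_load_place hsq _ k x.1)

lemma start_nonneg_of_mem_greedy {L : List (Fin n)} {x : Fin m × Fin n × ℝ × ℝ}
    (hx : x ∈ (greedy s q L).parts) : 0 ≤ x.2.2.2 := by
  induction L using List.reverseRecOn with
  | nil => simp at hx
  | append_singleton L k ih =>
    simp only [greedy_append_singleton, State.place, mem_insert] at hx
    rcases hx with rfl | hx
    exacts [load_greedy_nonneg hsq L _, ih hx]

lemma not_mem_greedy_of_start_eq_load (L : List (Fin n)) (i : Fin m) (k : Fin n) :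
    (i, k, q k, (greedy s q L).load i) ∉ (greedy s q L).parts := fun hx => by
  have := finish_le_load_of_mem_greedy hsq hx
  linarith [hsq k]

lemma sum_length_filter_job_greedy (L : List (Fin n)) (j : Fin n) :
    ∑ x ∈ (greedy (m := m) s q L).parts with x.2.1 = j, x.2.2.1 = L.count j * q j := by
  induction L using List.reverseRecOn with
  | nil => simp
  | append_singleton L k ih =>
    simp only [greedy_append_singleton, State.place, filter_insert, List.count_append,
      List.count_singleton, beq_iff_eq]
    by_cases hkj : k = j
    · subst hkj
      rw [if_pos rfl, sum_insert fun hx =>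
        not_mem_greedy_of_start_eq_load hsq L _ k (mem_of_mem_filter _ hx), ih]
      simp only [if_true, Nat.cast_add, Nat.cast_one]
      ring
    · simp [hkj, ih]

lemma disjoint_of_mem_greedy {L : List (Fin n)} {x y : Fin m × Fin n × ℝ × ℝ}
    (hx : x ∈ (greedy s q L).parts) (hy : y ∈ (greedy s q L).parts) (hxy : x ≠ y)
    (hmach : x.1 = y.1) :
    x.2.2.2 + s + x.2.2.1 ≤ y.2.2.2 ∨ y.2.2.2 + s + y.2.2.1 ≤ x.2.2.2 := by
  induction L using List.reverseRecOn with
  | nil => simp at hx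
  | append_singleton L k ih =>
    simp only [greedy_append_singleton, State.place, mem_insert] at hx hy
    rcases hx with rfl | hx <;> rcases hy with rfl | hy
    · exact absurd rfl hxy
    · simp only at hmach ⊢
      exact .inr (hmach ▸ finish_le_load_of_mem_greedy hsq hy)
    · simp only at hmach ⊢
      exact .inl (hmach ▸ finish_le_load_of_mem_greedy hsq hx)
    · exact ih hx hy

end

variable {p : Fin n → ℝ}

noncomputable def schedule (L : List (Fin n)) (hs : 0 ≤ s) (hq : ∀ k, 0 < q k)
    (hL : ∀ j, L.count j * q j = p j) : Schedule m n p s where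
  parts := (greedy s q L).parts
  q_pos _ hx := length_eq_of_mem_greedy hx ▸ hq _
  t_nonneg _ hx := start_nonneg_of_mem_greedy (fun k => add_pos_of_nonneg_of_pos hs (hq k)) hx
  sum_q j :=
    (sum_length_filter_job_greedy (fun k => add_pos_of_nonneg_of_pos hs (hq k)) L j).trans (hL j)
  disj _ hx _ hy := disjoint_of_mem_greedy (fun k => add_pos_of_nonneg_of_pos hs (hq k)) hx hy

lemma C_schedule_le {L : List (Fin n)} (hs : 0 ≤ s) (hq : ∀ k, 0 < q k)
    (hL : ∀ j, L.count j * q j = p j) {j : Fin n} {B : ℝ} (hB : 0 ≤ B)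
    (h : ∀ L₁ L₂, L = L₁ ++ j :: L₂ → (L₁.map (s + q ·)).sum / m + s + q j ≤ B) :
    (schedule (m := m) L hs hq hL).C j ≤ B := by
  refine Schedule.C_le hB fun x hx hj => ?_
  obtain ⟨L₁, L₂, hsplit, hstart⟩ := exists_split_start_le_of_mem_greedy hx
  rw [hj] at hsplit
  have hlen := length_eq_of_mem_greedy hx
  rw [hj] at hlen
  linarith [h L₁ L₂ hsplit]

end ListScheduling

lemma List.sum_map_le_sum_count_of_sublist {ι M : Type*} [DecidableEq ι] [AddCommMonoid M]
    [PartialOrder M] [IsOrderedAddMonoid M] {l L : List ι} (hl : l.Sublist L) {t : Finset ι}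
    (ht : ∀ i ∈ l, i ∈ t) {f : ι → M} (hf : ∀ i, 0 ≤ f i) :
    (l.map f).sum ≤ ∑ i ∈ t, L.count i • f i := by
  rw [sum_list_map_count]
  calc ∑ i ∈ l.toFinset, l.count i • f i ≤ ∑ i ∈ l.toFinset, L.count i • f i :=
        sum_le_sum fun i _ => nsmul_le_nsmul_left (hf i) (hl.count_le i)
    _ ≤ ∑ i ∈ t, L.count i • f i :=
        sum_le_sum_of_subset_of_nonneg (fun i hi => ht i (List.mem_toFinset.mp hi))
          fun i _ _ => nsmul_nonneg (hf i) _

lemma List.sum_map_le_sum_count_Iic_of_pairwise {ι M : Type*} [DecidableEq ι] [Preorder ι]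
    [LocallyFiniteOrderBot ι] [AddCommMonoid M] [PartialOrder M] [IsOrderedAddMonoid M]
    {L L₁ L₂ : List ι} {k : ι} (hL : L.Pairwise (· ≤ ·)) (hsplit : L = L₁ ++ k :: L₂)
    {f : ι → M} (hf : ∀ i, 0 ≤ f i) :
    ((L₁ ++ [k]).map f).sum ≤ ∑ i ∈ Iic k, L.count i • f i := by
  subst hsplit
  refine List.sum_map_le_sum_count_of_sublist (by simp) (fun i hi => ?_) hf
  rw [List.pairwise_append] at hL
  rw [List.mem_append, List.mem_singleton] at hi
  rcases hi with hi | rfl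
  exacts [mem_Iic.mpr (hL.2.2 i hi k List.mem_cons_self), mem_Iic.mpr le_rfl]

lemma List.count_flatMap_finRange_replicate {n : ℕ} (d : Fin n → ℕ) (j : Fin n) :
    ((List.finRange n).flatMap fun k => List.replicate (d k) k).count j = d j := by
  rw [List.count_flatMap, ← Fin.sum_univ_def]
  simp [List.count_replicate]

lemma List.pairwise_le_flatMap_finRange_replicate {n : ℕ} (d : Fin n → ℕ) :
    ((List.finRange n).flatMap fun k => List.replicate (d k) k).Pairwise (· ≤ ·) := by
  rw [List.pairwise_flatMap]
  refine ⟨fun a _ => List.pairwise_replicate.mpr (.inr le_rfl), ?_⟩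
  exact (List.pairwise_lt_finRange n).imp fun hab x hx y hy => by
    rw [List.eq_of_mem_replicate hx, List.eq_of_mem_replicate hy]; exact hab.le

section Pieces

variable {n : ℕ} (α s : ℝ) (p : Fin n → ℝ)

noncomputable def numPieces (k : Fin n) : ℕ := ⌈α * p k / s⌉₊

noncomputable def pieceLen (k : Fin n) : ℝ := p k / numPieces α s p k

noncomputable def pieceList : List (Fin n) :=
  (List.finRange n).flatMap fun k => List.replicate (numPieces α s p k) k

variable {α s p}

lemma count_pieceList (j : Fin n) : (pieceList α s p).count j = numPieces α s p j :=
  List.count_flatMap_finRange_replicate _ j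

variable (hα : 0 < α) (hs : 0 < s) (hp : ∀ k, 0 < p k)
include hα hs hp

lemma numPieces_pos (k : Fin n) : (0 : ℝ) < numPieces α s p k := by
  exact_mod_cast Nat.ceil_pos.mpr (by have := hp k; positivity)

lemma pieceLen_pos (k : Fin n) : 0 < pieceLen α s p k :=
  div_pos (hp k) (numPieces_pos hα hs hp k)

lemma numPieces_mul_pieceLen (k : Fin n) : numPieces α s p k * pieceLen α s p k = p k :=
  mul_div_cancel₀ _ (numPieces_pos hα hs hp k).ne'

lemma pieceLen_le (k : Fin n) : pieceLen α s p k ≤ s / α := by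
  rw [pieceLen, div_le_div_iff₀ (numPieces_pos hα hs hp k) hα, mul_comm (p k), mul_comm s,
    ← div_le_iff₀ hs]
  exact Nat.le_ceil _

lemma numPieces_mul_le (k : Fin n) : numPieces α s p k * s ≤ α * p k + s := by
  have hceil := Nat.ceil_lt_add_one (by have := hp k; positivity : 0 ≤ α * p k / s)
  calc numPieces α s p k * s ≤ (α * p k / s + 1) * s := by
        unfold numPieces; gcongr
    _ = α * p k + s := by field_simp

lemma sum_prefix_pieceList_le {L₁ L₂ : List (Fin n)} {k : Fin n}
    (hsplit : pieceList α s p = L₁ ++ k :: L₂) :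
    ((L₁ ++ [k]).map (s + pieceLen α s p ·)).sum
      ≤ (1 + α) * ∑ i ∈ Iic k, p i + ((k : ℕ) + 1) * s := by
  calc ((L₁ ++ [k]).map (s + pieceLen α s p ·)).sum
      ≤ ∑ i ∈ Iic k, (pieceList α s p).count i • (s + pieceLen α s p i) :=
        List.sum_map_le_sum_count_Iic_of_pairwise
          (List.pairwise_le_flatMap_finRange_replicate _) hsplit
          fun i => by linarith [pieceLen_pos hα hs hp i]
    _ = ∑ i ∈ Iic k, (numPieces α s p i * s + p i) := by
        refine sum_congr rfl fun i _ => ?_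
        rw [count_pieceList, nsmul_eq_mul, mul_add, numPieces_mul_pieceLen hα hs hp]
    _ ≤ ∑ i ∈ Iic k, ((1 + α) * p i + s) :=
        sum_le_sum fun i _ => by linarith [numPieces_mul_le hα hs hp i]
    _ = (1 + α) * ∑ i ∈ Iic k, p i + ((k : ℕ) + 1) * s := by
        rw [sum_add_distrib, ← mul_sum, sum_const, Fin.card_Iic, nsmul_eq_mul]
        push_cast
        ring

end Pieces

theorem stmt14_general {m n : ℕ} (hm : 0 < m) {p : Fin n → ℝ} (hp : ∀ j, 0 < p j)
    {s : ℝ} (hs : 0 < s) (α : ℝ) (hα : 0 < α) :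
    ∃ σ : Schedule m n p s, ∀ j : Fin n,
      σ.C j ≤
        ((1 + α) / (m : ℝ)) * (∑ k ∈ Finset.univ.filter (· ≤ j), p k) +
          (((j : ℕ) : ℝ) / (m : ℝ) + 1 + 1 / α) * s := by
  have : Nonempty (Fin m) := Fin.pos_iff_nonempty.mp hm
  refine ⟨ListScheduling.schedule (pieceList α s p) hs.le (pieceLen_pos hα hs hp)
    fun j => by rw [count_pieceList, numPieces_mul_pieceLen hα hs hp], fun j => ?_⟩
  rw [filter_ge_eq_Iic]
  have hP : 0 ≤ ∑ k ∈ Iic j, p k := sum_nonneg fun k _ => (hp k).le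
  refine ListScheduling.C_schedule_le _ _ _ (by positivity) fun L₁ L₂ hsplit => ?_
  have hprefix := sum_prefix_pieceList_le hα hs hp hsplit
  rw [List.map_append, List.sum_append, List.map_singleton, List.sum_singleton] at hprefix
  have hpiece := pieceLen_pos hα hs hp j
  calc (L₁.map (s + pieceLen α s p ·)).sum / m + s + pieceLen α s p j
      ≤ ((1 + α) * ∑ k ∈ Iic j, p k + (j : ℕ) * s) / m + s + s / α := by
        gcongr
        · linarith
        · exact pieceLen_le hα hs hp j
    _ = _ := by ring

/-- With `p` nondecreasing (all `p j > 0`) and `α > 0`,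
there is a feasible schedule `σ` on `m` machines with, for every job `j`
(0-indexed):
`C j σ ≤ ((1+α)/m) ∑_{k ≤ j} p k + ((j−1)/m + 1 + 1/α) s`. -/
theorem stmt14 {m n : ℕ} (hm : 0 < m) {p : Fin n → ℝ} (hp : ∀ j, 0 < p j)
    (hmono : Monotone p) {s : ℝ} (hs : 0 < s) (α : ℝ) (hα : 0 < α) :
    ∃ σ : Schedule m n p s, ∀ j : Fin n,
      σ.C j ≤
        ((1 + α) / (m : ℝ)) * (∑ k ∈ Finset.univ.filter (· ≤ j), p k) +
          (((j : ℕ) : ℝ) / (m : ℝ) + 1 + 1 / α) * s :=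
  stmt14_general hm hp hs α hα
end
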